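/- arXiv:1308.0377 — 10 statements merged into one kernel-verified Lean document; each statement's English description precedes it below -/
import Mathlib

section
/- If D is a finite point-determining digraph with at least one vertex, then there exists a vertex v of D such that the induced subdigraph D − v is also point-determining. -/
variable {V : Type*}

/-- `w` distinguishes distinct vertices `u` and `v`: exactly one of `u,v` is an
in-neighbour of `w`, or exactly one of `u,v` is an out-neighbour of `w`. -/
def Distinguishes (A : V → V → Prop) (w u v : V) : Prop :=
  w ≠ u ∧ w ≠ v ∧
    ((A u w ∧ ¬ A v w) ∨ (A v w ∧ ¬ A u w) ∨ (A w u ∧ ¬ A w v) ∨ (A w v ∧ ¬ A w u))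

/-- `u,v` are false twins in the induced subdigraph on `U`. -/
def FalseTwinsOn (A : V → V → Prop) (U : Set V) (u v : V) : Prop :=
  u ∈ U ∧ v ∈ U ∧ u ≠ v ∧ ¬ A u v ∧ ¬ A v u ∧ ∀ w ∈ U, ¬ Distinguishes A w u v

/-- `u,v` are true twins in the induced subdigraph on `U`. -/
def TrueTwinsOn (A : V → V → Prop) (U : Set V) (u v : V) : Prop :=
  u ∈ U ∧ v ∈ U ∧ u ≠ v ∧ A u v ∧ A v u ∧ ∀ w ∈ U, ¬ Distinguishes A w u v

/-- The induced subdigraph on `U` is point-determining: no pair of false twins. -/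
def PointDeterminingOn (A : V → V → Prop) (U : Set V) : Prop :=
  ∀ u v, ¬ FalseTwinsOn A U u v

/-- A triple `(x, {y,z})`: `x,y,z` are pairwise distinct and `y,z` are false
twins in `D - x`. `x` is the red vertex, `y,z` are the green vertices. -/
def IsTriple (A : V → V → Prop) (x y z : V) : Prop :=
  x ≠ y ∧ x ≠ z ∧ y ≠ z ∧ FalseTwinsOn A {x}ᶜ y z

/-- `S` is a homogeneous set: any two of its vertices are twins. -/
def Homogeneous (A : V → V → Prop) (S : Set V) : Prop :=
  ∀ u ∈ S, ∀ v ∈ S, u ≠ v → ∀ w, ¬ Distinguishes A w u v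

/-- `S` is a strong clique: arcs in both directions between any two distinct members. -/
def StrongClique (A : V → V → Prop) (S : Set V) : Prop :=
  ∀ u ∈ S, ∀ v ∈ S, u ≠ v → A u v ∧ A v u

/-- `S` is an independent set: no arcs between any two distinct members. -/
def IndepSet (A : V → V → Prop) (S : Set V) : Prop :=
  ∀ u ∈ S, ∀ v ∈ S, u ≠ v → ¬ A u v

/-- `P` is an `M`-partition of the induced subdigraph on `U`: the parts `P i`
partition `U`, a part with `M i i = 0` is independent, a part with `M i i = 1`
is a strong clique, and for `i ≠ j` all arcs from `P i` to `P j` are present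
iff `M i j = 1`. -/
def IsMPartitionOn (A : V → V → Prop) {n : ℕ} (M : Fin n → Fin n → Bool)
    (U : Set V) (P : Fin n → Set V) : Prop :=
  (∀ i, P i ⊆ U) ∧ (∀ v ∈ U, ∃! i, v ∈ P i) ∧
    ∀ i j, ∀ u ∈ P i, ∀ v ∈ P j, u ≠ v → (A u v ↔ M i j = true)

def HasMPartitionOn (A : V → V → Prop) {n : ℕ} (M : Fin n → Fin n → Bool)
    (U : Set V) : Prop :=
  ∃ P, IsMPartitionOn A M U P

/-- `D` is a minimal `M`-obstruction: it admits no `M`-partition, but every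
one-vertex-deleted induced subdigraph does. -/
def MinimalObstruction (A : V → V → Prop) {n : ℕ} (M : Fin n → Fin n → Bool) : Prop :=
  ¬ HasMPartitionOn A M Set.univ ∧ ∀ v : V, HasMPartitionOn A M {v}ᶜ
lemma exists_dep {V : Type*} [Fintype V] [Nonempty V]
    (u : V → (V → ZMod 2)) (hu : ∀ x, ∑ v, u x v = 0) :
    ∃ c : V → ZMod 2, (∑ x, c x • u x) = 0 ∧ ∃ x, c x ≠ 0 := by
  classical
  obtain ⟨v₀⟩ := ‹Nonempty V›
  set U : Option V → (V → ZMod 2) := fun i => i.elim (Pi.single v₀ 1) u with hU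
  have hnli : ¬ LinearIndependent (ZMod 2) U := by
    intro hli
    have hcard := hli.fintype_card_le_finrank
    rw [Module.finrank_pi] at hcard
    simp [Fintype.card_option] at hcard
  rw [Fintype.not_linearIndependent_iff] at hnli
  obtain ⟨g, hg, i, hi⟩ := hnli
  have hsU : ∀ i, ∑ v, U i v = if i = none then 1 else 0 := by
    rintro (_ | x)
    · simp [hU, Finset.sum_pi_single']
    · simp [hU, hu x]
  have hgnone : g none = 0 := by
    have h1 := congrArg (fun f : V → ZMod 2 => ∑ v, f v) hg
    simp only [Finset.sum_apply, Pi.smul_apply, smul_eq_mul, Pi.zero_apply,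
      Finset.sum_const_zero] at h1
    rw [Finset.sum_comm] at h1
    have h2 : ∑ i, ∑ v, g i * U i v = g none := by
      rw [Fintype.sum_option]
      simp only [← Finset.mul_sum, hsU]
      simp
    rw [h2] at h1
    exact h1
  refine ⟨fun x => g (some x), ?_, ?_⟩
  · have := hg
    rw [Fintype.sum_option, hgnone, zero_smul, zero_add] at this
    exact this
  · rcases i with _ | x
    · exact absurd hgnone hi
    · exact ⟨x, hi⟩

theorem stmt0 [Fintype V] [Nonempty V] (A : V → V → Prop)
    (hirr : ∀ v, ¬ A v v) (hpd : PointDeterminingOn A Set.univ) :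
    ∃ v : V, PointDeterminingOn A {v}ᶜ := by
  classical
  by_contra hcon
  push_neg at hcon
  have H : ∀ x : V, ∃ p : V × V, FalseTwinsOn A {x}ᶜ p.1 p.2 := by
    intro x
    have hx := hcon x
    unfold PointDeterminingOn at hx
    push_neg at hx
    obtain ⟨a, b, hab⟩ := hx
    exact ⟨(a, b), hab⟩
  choose p hp using H
  set y : V → V := fun x => (p x).1 with hy
  set z : V → V := fun x => (p x).2 with hz
  have hyne : ∀ x, y x ≠ x := fun x => (hp x).1
  have hzne : ∀ x, z x ≠ x := fun x => (hp x).2.1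
  have hne : ∀ x, y x ≠ z x := fun x => (hp x).2.2.1
  have hAyz : ∀ x, ¬ A (y x) (z x) := fun x => (hp x).2.2.2.1
  have hAzy : ∀ x, ¬ A (z x) (y x) := fun x => (hp x).2.2.2.2.1
  have hnd : ∀ x, ∀ w, w ≠ x → ¬ Distinguishes A w (y x) (z x) :=
    fun x w hw => (hp x).2.2.2.2.2 w hw
  -- the deleted vertex distinguishes the pair
  have hdist : ∀ x, Distinguishes A x (y x) (z x) := by
    intro x
    by_contra hno
    refine hpd (y x) (z x) ⟨trivial, trivial, hne x, hAyz x, hAzy x, ?_⟩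
    intro w _
    rcases eq_or_ne w x with rfl | hw
    · exact hno
    · exact hnd x w hw
  -- exchange property: y x and z x have identical arcs to/from any w ≠ x
  have hE : ∀ x w, w ≠ x → ((A (y x) w ↔ A (z x) w) ∧ (A w (y x) ↔ A w (z x))) := by
    intro x w hwx
    rcases eq_or_ne w (y x) with rfl | h1
    · exact ⟨iff_of_false (hirr _) (hAzy x), iff_of_false (hirr _) (hAyz x)⟩
    rcases eq_or_ne w (z x) with rfl | h2
    · exact ⟨iff_of_false (hAyz x) (hirr _), iff_of_false (hAzy x) (hirr _)⟩
    have hD := hnd x w hwx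
    unfold Distinguishes at hD
    have hnd4 : ¬ ((A (y x) w ∧ ¬ A (z x) w) ∨ (A (z x) w ∧ ¬ A (y x) w) ∨
        (A w (y x) ∧ ¬ A w (z x)) ∨ (A w (z x) ∧ ¬ A w (y x))) :=
      fun h => hD ⟨h1, h2, h⟩
    push_neg at hnd4
    exact ⟨⟨hnd4.1, hnd4.2.1⟩, ⟨hnd4.2.2.1, hnd4.2.2.2⟩⟩
  -- GF(2) vectors
  set u : V → (V → ZMod 2) :=
    fun x v => (if v = y x then 1 else 0) + (if v = z x then 1 else 0) with hu
  have htwo : ∀ a : ZMod 2, a + a = 0 := by decide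
  have hone : ∀ a : ZMod 2, a ≠ 0 → a = 1 := by decide
  have husum : ∀ x, ∑ v, u x v = 0 := by
    intro x
    rw [Finset.sum_add_distrib]
    rw [Finset.sum_ite_eq' Finset.univ (y x) (fun _ => (1 : ZMod 2))]
    rw [Finset.sum_ite_eq' Finset.univ (z x) (fun _ => (1 : ZMod 2))]
    simp only [Finset.mem_univ, if_true]
    exact htwo 1
  obtain ⟨c, hc0, ℓ, hcℓ⟩ := exists_dep u husum
  -- key summation identity
  have hkey : ∀ F : V → ZMod 2, ∑ x, c x * (F (y x) + F (z x)) = 0 := by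
    intro F
    have h0 : ∀ v, ∑ x, c x * u x v = 0 := by
      intro v
      have := congrFun hc0 v
      simpa [Finset.sum_apply, Pi.smul_apply, smul_eq_mul] using this
    have e1 : ∀ x, ∑ v, u x v * F v = F (y x) + F (z x) := by
      intro x
      simp only [hu, add_mul, ite_mul, one_mul, zero_mul]
      rw [Finset.sum_add_distrib, Finset.sum_ite_eq' Finset.univ (y x) F,
        Finset.sum_ite_eq' Finset.univ (z x) F]
      simp
    calc ∑ x, c x * (F (y x) + F (z x))
        = ∑ x, c x * (∑ v, u x v * F v) := by
          refine Finset.sum_congr rfl fun x _ => ?_; rw [e1]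
      _ = ∑ x, ∑ v, c x * u x v * F v := by
          refine Finset.sum_congr rfl fun x _ => ?_
          rw [Finset.mul_sum]; exact Finset.sum_congr rfl fun v _ => (mul_assoc _ _ _).symm
      _ = ∑ v, ∑ x, c x * u x v * F v := Finset.sum_comm
      _ = ∑ v, (∑ x, c x * u x v) * F v := by
          refine Finset.sum_congr rfl fun v _ => ?_; rw [Finset.sum_mul]
      _ = 0 := by simp only [h0, zero_mul, Finset.sum_const_zero]
  -- finish: from the distinguishing asymmetry at ℓ
  have main : ∀ F : V → ZMod 2, (∀ x, x ≠ ℓ → F (y x) = F (z x)) →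
      F (y ℓ) + F (z ℓ) = 1 → False := by
    intro F hFx hFℓ
    have h1 := hkey F
    rw [Finset.sum_eq_single ℓ (fun x _ hx => by rw [hFx x hx, htwo, mul_zero])
      (fun h => absurd (Finset.mem_univ ℓ) h)] at h1
    rw [hFℓ, mul_one, hone _ hcℓ] at h1
    exact one_ne_zero h1
  obtain ⟨-, -, hd⟩ := hdist ℓ
  rcases hd with h | h | h | h
  · exact main (fun v => if A v ℓ then 1 else 0)
      (fun x hx => if_congr ((hE x ℓ (Ne.symm hx)).1) rfl rfl)
      (by simp [h.1, h.2])
  · exact main (fun v => if A v ℓ then 1 else 0)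
      (fun x hx => if_congr ((hE x ℓ (Ne.symm hx)).1) rfl rfl)
      (by simp [h.1, h.2])
  · exact main (fun v => if A ℓ v then 1 else 0)
      (fun x hx => if_congr ((hE x ℓ (Ne.symm hx)).2) rfl rfl)
      (by simp [h.1, h.2])
  · exact main (fun v => if A ℓ v then 1 else 0)
      (fun x hx => if_congr ((hE x ℓ (Ne.symm hx)).2) rfl rfl)
      (by simp [h.1, h.2])
end

section
/- Let D be a point-determining digraph and let T1 = (x1, {y1, z1}) and T2 = (x2, {y2, z2}) be two triples of D. If some vertex is simultaneously a green vertex of T1 and the red vertex of T2, then some other vertex is simultaneously a green vertex of T2 and the red vertex of T1. -/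
variable {V : Type*}

lemma distinguishes_symm {A : V → V → Prop} {w u v : V}
    (h : Distinguishes A w u v) : Distinguishes A w v u := by
  unfold Distinguishes at *; tauto

lemma triple_symm {A : V → V → Prop} {x y z : V}
    (h : IsTriple A x y z) : IsTriple A x z y := by
  obtain ⟨h1, h2, h3, m1, m2, m3, m4, m5, m6⟩ := h
  exact ⟨h2, h1, h3.symm, m2, m1, m3.symm, m5, m4,
    fun w hw hd => m6 w hw (distinguishes_symm hd)⟩

lemma nondist_iff {A : V → V → Prop} {w u v : V} (hwu : w ≠ u) (hwv : w ≠ v)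
    (h : ¬ Distinguishes A w u v) : (A u w ↔ A v w) ∧ (A w u ↔ A w v) := by
  unfold Distinguishes at h; push_neg at h; constructor <;> tauto

/-- x₂ distinguishes y₂, z₂ (using point-determining). -/
lemma red_distinguishes {A : V → V → Prop} (hpd : PointDeterminingOn A Set.univ)
    {x y z : V} (hT : IsTriple A x y z) : Distinguishes A x y z := by
  obtain ⟨h1, h2, h3, _, _, m3, m4, m5, m6⟩ := hT
  have := hpd y z
  unfold FalseTwinsOn at this
  push_neg at this
  obtain ⟨w, -, hw⟩ := this trivial trivial m3 m4 m5
  rcases eq_or_ne w x with rfl | hne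
  · exact hw
  · exact absurd hw (m6 w hne)

lemma key {A : V → V → Prop}
    (hpd : PointDeterminingOn A Set.univ)
    {x₁ y₁ z₁ x₂ y₂ z₂ : V}
    (hT1 : IsTriple A x₁ y₁ z₁) (hT2 : IsTriple A x₂ y₂ z₂)
    (hshare : x₂ = y₁) :
    x₁ ≠ x₂ ∧ (x₁ = y₂ ∨ x₁ = z₂) := by
  subst hshare
  obtain ⟨hxy, hxz, hyz, -, -, -, hnarc1, hnarc2, hnd1⟩ := hT1
  refine ⟨hxy, ?_⟩
  by_contra hc
  push_neg at hc
  obtain ⟨hc1, hc2⟩ := hc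
  have hdist : Distinguishes A x₂ y₂ z₂ := red_distinguishes hpd hT2
  obtain ⟨hx2y2, hx2z2, hy2z2, -, -, -, hnarc3, hnarc4, hnd2⟩ := hT2
  -- cases on whether z₁ coincides with y₂ or z₂
  rcases eq_or_ne z₁ y₂ with rfl | hz1y2
  · -- z₁ = y₂ : contradiction via z₂ not distinguishing x₂ z₁
    have hz2 : ¬ Distinguishes A z₂ x₂ z₁ :=
      hnd1 z₂ (by simpa using hc2.symm)
    have h1 := nondist_iff (Ne.symm hx2z2) (Ne.symm hy2z2) hz2
    obtain ⟨-, -, hd⟩ := hdist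
    tauto
  rcases eq_or_ne z₁ z₂ with rfl | hz1z2
  · have hz2 : ¬ Distinguishes A y₂ x₂ z₁ :=
      hnd1 y₂ (by simpa using hc1.symm)
    have h1 := nondist_iff (Ne.symm hx2y2) (Ne.symm hy2z2).symm hz2
    obtain ⟨-, -, hd⟩ := hdist
    tauto
  · -- generic case: z₁ also distinguishes y₂ z₂, contradicting T2
    have hy2nd : ¬ Distinguishes A y₂ x₂ z₁ :=
      hnd1 y₂ (by simpa using hc1.symm)
    have hz2nd : ¬ Distinguishes A z₂ x₂ z₁ :=
      hnd1 z₂ (by simpa using hc2.symm)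
    have h1 := nondist_iff (Ne.symm hx2y2) (Ne.symm hz1y2) hy2nd
    have h2 := nondist_iff (Ne.symm hx2z2) (Ne.symm hz1z2) hz2nd
    obtain ⟨-, -, hd⟩ := hdist
    have : Distinguishes A z₁ y₂ z₂ := by
      refine ⟨hz1y2, hz1z2, ?_⟩
      rcases hd with ⟨a, b⟩ | ⟨a, b⟩ | ⟨a, b⟩ | ⟨a, b⟩
      · exact Or.inl ⟨h1.2.mp a, fun h => b (h2.2.mpr h)⟩
      · exact Or.inr (Or.inl ⟨h2.2.mp a, fun h => b (h1.2.mpr h)⟩)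
      · exact Or.inr (Or.inr (Or.inl ⟨h1.1.mp a, fun h => b (h2.1.mpr h)⟩))
      · exact Or.inr (Or.inr (Or.inr ⟨h2.1.mp a, fun h => b (h1.1.mpr h)⟩))
    exact hnd2 z₁ (by simpa using hyz.symm) this

theorem stmt1 [Fintype V] (A : V → V → Prop) (hirr : ∀ v, ¬ A v v)
    (hpd : PointDeterminingOn A Set.univ)
    {x₁ y₁ z₁ x₂ y₂ z₂ : V}
    (hT1 : IsTriple A x₁ y₁ z₁) (hT2 : IsTriple A x₂ y₂ z₂)
    (hshare : x₂ = y₁ ∨ x₂ = z₁) :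
    x₁ ≠ x₂ ∧ (x₁ = y₂ ∨ x₁ = z₂) := by
  rcases hshare with h | h
  · exact key hpd hT1 hT2 h
  · exact key hpd (triple_symm hT1) hT2 h
end

section
/- Every finite point-determining digraph D with at least one vertex contains a vertex that is not the red vertex of any triple of D. -/
variable {V : Type*}

theorem stmt2 [Fintype V] [Nonempty V] (A : V → V → Prop)
    (hirr : ∀ v, ¬ A v v) (hpd : PointDeterminingOn A Set.univ) :
    ∃ v : V, ∀ y z : V, ¬ IsTriple A v y z := by
  classical
  by_contra hcon
  push_neg at hcon
  choose y z hT using hcon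
  -- encode in/out neighbourhoods as vectors over ZMod 2
  set g : V → (V × Bool → ZMod 2) := fun v p =>
    if p.2 then (if A v p.1 then 1 else 0) else (if A p.1 v then 1 else 0) with hg
  set d : V → (V × Bool → ZMod 2) := fun x => g (y x) - g (z x) with hd
  -- d x vanishes off coordinate block x
  have hsupp : ∀ x w, w ≠ x → ∀ b, d x (w, b) = 0 := by
    intro x w hw b
    obtain ⟨hxy, hxz, hyz, -, -, -, hnAyz, hnAzy, hnd⟩ := hT x
    have hnd' := hnd w hw
    simp only [hd, hg, Pi.sub_apply]
    rcases eq_or_ne w (y x) with rfl | hwy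
    · cases b <;> simp [hirr, hnAyz, hnAzy]
    rcases eq_or_ne w (z x) with rfl | hwz
    · cases b <;> simp [hirr, hnAyz, hnAzy]
    · simp only [Distinguishes, ne_eq, not_and, not_or] at hnd'
      have h4 := hnd' hwy hwz
      cases b
      · by_cases h1 : A w (y x) <;> by_cases h2 : A w (z x) <;> simp [h1, h2] <;> tauto
      · by_cases h1 : A (y x) w <;> by_cases h2 : A (z x) w <;> simp [h1, h2] <;> tauto
  -- d x is nonzero at coordinate block x
  have hnz : ∀ x, ∃ b, d x (x, b) ≠ 0 := by
    intro x
    obtain ⟨hxy, hxz, hyz, -, -, -, hnAyz, hnAzy, hnd⟩ := hT x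
    have := hpd (y x) (z x)
    simp only [FalseTwinsOn, Set.mem_univ, true_and, ne_eq] at this
    push_neg at this
    obtain ⟨w, -, hw⟩ := this hyz hnAyz hnAzy
    have hwx : w = x := by
      by_contra hne
      exact hnd w hne hw
    subst hwx
    obtain ⟨-, -, hcase⟩ := hw
    simp only [hd, hg, Pi.sub_apply]
    rcases hcase with ⟨h1, h2⟩ | ⟨h1, h2⟩ | ⟨h1, h2⟩ | ⟨h1, h2⟩
    · exact ⟨true, by simp [h1, h2]⟩
    · exact ⟨true, by simp [h1, h2]⟩
    · exact ⟨false, by simp [h1, h2]⟩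
    · exact ⟨false, by simp [h1, h2]⟩
  -- linear independence
  have hli : LinearIndependent (ZMod 2) d := by
    rw [Fintype.linearIndependent_iff]
    intro c hc x
    obtain ⟨b, hb⟩ := hnz x
    have h0 := congrFun hc (x, b)
    rw [Finset.sum_apply] at h0
    have hsum : ∑ i : V, (c i • d i) (x, b) = c x * d x (x, b) := by
      rw [Finset.sum_eq_single x]
      · simp
      · intro i _ hi
        simp [hsupp i x (Ne.symm hi) b]
      · simp
    rw [hsum] at h0
    rcases mul_eq_zero.mp h0 with h | h
    · exact h
    · exact absurd h hb
  -- all d x lie in the span of differences from a base point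
  have v0 : V := Classical.arbitrary V
  set f : V → (V × Bool → ZMod 2) := fun v => g v - g v0 with hf
  set t : Finset (V × Bool → ZMod 2) := (Finset.univ.erase v0).image f with ht
  set S : Submodule (ZMod 2) (V × Bool → ZMod 2) := Submodule.span (ZMod 2) (t : Set _) with hS
  have hfS : ∀ v, f v ∈ S := by
    intro v
    rcases eq_or_ne v v0 with h | hv
    · have : f v = 0 := by simp [hf, h]
      rw [this]; exact S.zero_mem
    · apply Submodule.subset_span
      simp only [ht, Finset.coe_image, Set.mem_image, Finset.mem_coe, Finset.mem_erase]
      exact ⟨v, ⟨hv, Finset.mem_univ v⟩, rfl⟩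
  have hdS : ∀ x, d x ∈ S := by
    intro x
    have : d x = f (y x) - f (z x) := by simp [hd, hf]
    rw [this]
    exact S.sub_mem (hfS _) (hfS _)
  have hspan : Submodule.span (ZMod 2) (Set.range d) ≤ S :=
    Submodule.span_le.mpr (by rintro _ ⟨x, rfl⟩; exact hdS x)
  have h1 : Module.finrank (ZMod 2) (Submodule.span (ZMod 2) (Set.range d)) = Fintype.card V :=
    finrank_span_eq_card hli
  have h2 : Module.finrank (ZMod 2) S ≤ t.card := finrank_span_finset_le_card t
  have h3 : Module.finrank (ZMod 2) (Submodule.span (ZMod 2) (Set.range d)) ≤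
      Module.finrank (ZMod 2) S := Submodule.finrank_mono hspan
  have h4 : t.card ≤ Fintype.card V - 1 := by
    calc t.card ≤ (Finset.univ.erase v0).card := Finset.card_image_le
    _ = Fintype.card V - 1 := by rw [Finset.card_erase_of_mem (Finset.mem_univ v0), Finset.card_univ]
  have hpos : 0 < Fintype.card V := Fintype.card_pos
  omega
end

section
/- If D is a finite digraph with no pair of true twins and at least one vertex, then there exists a vertex v such that D − v has no pair of true twins. -/
variable {V : Type*}

lemma tt_ite_eq_one {p : Prop} [Decidable p] :
    (if p then (1 : ZMod 2) else 0) = 1 ↔ p := by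
  split_ifs with h <;> simp [h]

lemma tt_ite_congr {p q : Prop} [Decidable p] [Decidable q] :
    ((if p then (1 : ZMod 2) else 0) = if q then 1 else 0) ↔ (p ↔ q) := by
  split_ifs with h1 h2 h2 <;> simp [h1, h2]

open Classical in
noncomputable def ttPsi (A : V → V → Prop) (a t : V) : ZMod 2 × ZMod 2 :=
  if t = a then (1, 1) else (if A a t then 1 else 0, if A t a then 1 else 0)

lemma ttPsi_eq_iff (A : V → V → Prop) {a b t : V} (ha : t ≠ a) (hb : t ≠ b) :
    ttPsi A a t = ttPsi A b t ↔ ((A a t ↔ A b t) ∧ (A t a ↔ A t b)) := by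
  classical
  simp only [ttPsi, if_neg ha, if_neg hb, Prod.mk.injEq]
  rw [tt_ite_congr, tt_ite_congr]

lemma ttPsi_diag_iff (A : V → V → Prop) {a b : V} (hab : b ≠ a) :
    ttPsi A a b = ttPsi A b b ↔ (A a b ∧ A b a) := by
  classical
  simp only [ttPsi, if_neg hab, eq_self_iff_true, if_true, Prod.mk.injEq]
  rw [tt_ite_eq_one, tt_ite_eq_one]

lemma ttPsi_twins (A : V → V → Prop) {a b : V} (hab : a ≠ b) :
    (∀ t, ttPsi A a t = ttPsi A b t) ↔ TrueTwinsOn A Set.univ a b := by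
  constructor
  · intro h
    have harc : A a b ∧ A b a := (ttPsi_diag_iff A hab.symm).1 (h b)
    refine ⟨trivial, trivial, hab, harc.1, harc.2, ?_⟩
    intro w _ hd
    obtain ⟨hwa, hwb, hcases⟩ := hd
    have := (ttPsi_eq_iff A hwa hwb).1 (h w)
    rcases hcases with ⟨h1, h2⟩ | ⟨h1, h2⟩ | ⟨h1, h2⟩ | ⟨h1, h2⟩
    · exact h2 (this.1.1 h1)
    · exact h2 (this.1.2 h1)
    · exact h2 (this.2.1 h1)
    · exact h2 (this.2.2 h1)
  · rintro ⟨-, -, -, hA1, hA2, hno⟩ t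
    by_cases hta : t = a
    · subst hta
      exact ((ttPsi_diag_iff A hab).2 ⟨hA2, hA1⟩).symm
    · by_cases htb : t = b
      · subst htb
        exact (ttPsi_diag_iff A hta).2 ⟨hA1, hA2⟩
      · have hnd := hno t trivial
        have h1 : A a t ↔ A b t := by
          constructor
          · intro h; by_contra h'; exact hnd ⟨hta, htb, Or.inl ⟨h, h'⟩⟩
          · intro h; by_contra h'; exact hnd ⟨hta, htb, Or.inr (Or.inl ⟨h, h'⟩)⟩
        have h2 : A t a ↔ A t b := by
          constructor
          · intro h; by_contra h'; exact hnd ⟨hta, htb, Or.inr (Or.inr (Or.inl ⟨h, h'⟩))⟩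
          · intro h; by_contra h'; exact hnd ⟨hta, htb, Or.inr (Or.inr (Or.inr ⟨h, h'⟩))⟩
        exact (ttPsi_eq_iff A hta htb).2 ⟨h1, h2⟩

lemma ttPsi_twins_compl (A : V → V → Prop) {v a b : V}
    (h : TrueTwinsOn A {v}ᶜ a b) : ∀ t, t ≠ v → ttPsi A a t = ttPsi A b t := by
  obtain ⟨hav, hbv, hab, hA1, hA2, hno⟩ := h
  intro t htv
  by_cases hta : t = a
  · subst hta
    exact ((ttPsi_diag_iff A hab).2 ⟨hA2, hA1⟩).symm
  · by_cases htb : t = b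
    · subst htb
      exact (ttPsi_diag_iff A hta).2 ⟨hA1, hA2⟩
    · have hnd := hno t (by simpa using htv)
      have h1 : A a t ↔ A b t := by
        constructor
        · intro h; by_contra h'; exact hnd ⟨hta, htb, Or.inl ⟨h, h'⟩⟩
        · intro h; by_contra h'; exact hnd ⟨hta, htb, Or.inr (Or.inl ⟨h, h'⟩)⟩
      have h2 : A t a ↔ A t b := by
        constructor
        · intro h; by_contra h'; exact hnd ⟨hta, htb, Or.inr (Or.inr (Or.inl ⟨h, h'⟩))⟩
        · intro h; by_contra h'; exact hnd ⟨hta, htb, Or.inr (Or.inr (Or.inr ⟨h, h'⟩))⟩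
      exact (ttPsi_eq_iff A hta htb).2 ⟨h1, h2⟩

theorem stmt4 [Fintype V] [Nonempty V] (A : V → V → Prop)
    (hirr : ∀ v, ¬ A v v)
    (htt : ∀ u v : V, ¬ TrueTwinsOn A Set.univ u v) :
    ∃ v : V, ∀ a b : V, ¬ TrueTwinsOn A {v}ᶜ a b := by
  classical
  by_contra hcon
  push_neg at hcon
  choose a b hab using hcon
  have hne : ∀ v, a v ≠ b v := fun v => (hab v).2.2.1
  have hoff : ∀ v t, t ≠ v → ttPsi A (a v) t = ttPsi A (b v) t :=
    fun v => ttPsi_twins_compl A (hab v)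
  have hat : ∀ v, ttPsi A (a v) v ≠ ttPsi A (b v) v := by
    intro v h
    apply htt (a v) (b v)
    refine (ttPsi_twins A (hne v)).1 ?_
    intro t
    by_cases ht : t = v
    · subst ht; exact h
    · exact hoff v t ht
  let δ : V → V → ZMod 2 × ZMod 2 := fun v => ttPsi A (a v) + ttPsi A (b v)
  have hδ_off : ∀ v t, t ≠ v → δ v t = 0 := by
    intro v t ht
    show ttPsi A (a v) t + ttPsi A (b v) t = 0
    rw [hoff v t ht, Prod.ext_iff]
    constructor <;> simp [CharTwo.add_self_eq_zero]
  have hδ_diag : ∀ v, δ v v ≠ 0 := by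
    intro v h
    apply hat v
    have h1 : ttPsi A (a v) v = -(ttPsi A (b v) v) :=
      eq_neg_of_add_eq_zero_left h
    rw [h1, Prod.ext_iff]
    constructor <;> simp [CharTwo.neg_eq]
  let F : (V → ZMod 2) →ₗ[ZMod 2] (V → ZMod 2 × ZMod 2) :=
    { toFun := fun c => ∑ x, c x • ttPsi A x
      map_add' := by
        intro c d
        simp [add_smul, Finset.sum_add_distrib]
      map_smul' := by
        intro r c
        simp [smul_smul, Finset.smul_sum] }
  have hF : ∀ y : V, F (Pi.single y 1) = ttPsi A y := by
    intro y
    have h0 : F (Pi.single y 1) = ∑ x, (Pi.single y 1 : V → ZMod 2) x • ttPsi A x := rfl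
    rw [h0, Finset.sum_eq_single y]
    · rw [Pi.single_eq_same, one_smul]
    · intro x _ hx
      rw [Pi.single_eq_of_ne hx, zero_smul]
    · intro hy; exact absurd (Finset.mem_univ y) hy
  let g : V → (V → ZMod 2) := fun v => Pi.single (a v) 1 + Pi.single (b v) 1
  have hFg : ∀ v, F (g v) = δ v := by
    intro v
    show F (Pi.single (a v) 1 + Pi.single (b v) 1) = _
    rw [map_add, hF, hF]
  have hgind : LinearIndependent (ZMod 2) g := by
    rw [Fintype.linearIndependent_iff]
    intro c hc u
    have hδc : (∑ v, c v • δ v) = 0 := by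
      have h2 : F (∑ v, c v • g v) = ∑ v, c v • δ v := by
        rw [map_sum]
        exact Finset.sum_congr rfl fun v _ => by rw [map_smul, hFg]
      rw [hc, map_zero] at h2
      exact h2.symm
    have h3 := congrFun hδc u
    rw [Finset.sum_apply] at h3
    simp only [Pi.zero_apply] at h3
    have hsum : (∑ v, (c v • δ v) u) = c u • δ u u := by
      rw [Finset.sum_eq_single u]
      · rfl
      · intro x _ hx
        show c x • δ x u = 0
        rw [hδ_off x u (Ne.symm hx), smul_zero]
      · intro hu; exact absurd (Finset.mem_univ u) hu
    rw [hsum] at h3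
    rcases (show ∀ x : ZMod 2, x = 0 ∨ x = 1 by decide) (c u) with h4 | h4
    · exact h4
    · rw [h4, one_smul] at h3
      exact absurd h3 (hδ_diag u)
  have hcard : Fintype.card V = Module.finrank (ZMod 2) (V → ZMod 2) := by
    rw [Module.finrank_pi]
  have hspan := hgind.span_eq_top_of_card_eq_finrank hcard
  let σ : (V → ZMod 2) →ₗ[ZMod 2] ZMod 2 :=
    { toFun := fun c => ∑ x, c x
      map_add' := by intro c d; simp [Finset.sum_add_distrib]
      map_smul' := by intro r c; simp [Finset.mul_sum] }
  have hσsingle : ∀ y : V, σ (Pi.single y (1 : ZMod 2)) = 1 := by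
    intro y
    have h0 : σ (Pi.single y (1 : ZMod 2)) = ∑ x, (Pi.single y 1 : V → ZMod 2) x := rfl
    rw [h0, Finset.sum_eq_single y]
    · exact Pi.single_eq_same y 1
    · intro x _ hx; exact Pi.single_eq_of_ne hx 1
    · intro hy; exact absurd (Finset.mem_univ y) hy
  have hσg : ∀ v, σ (g v) = 0 := by
    intro v
    have h0 : σ (g v) = σ (Pi.single (a v) 1) + σ (Pi.single (b v) 1) := map_add σ _ _
    rw [h0, hσsingle, hσsingle]
    decide
  have hσzero : ∀ x : V → ZMod 2, σ x = 0 := by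
    intro x
    have hx : x ∈ Submodule.span (ZMod 2) (Set.range g) := hspan ▸ Submodule.mem_top
    refine Submodule.span_induction ?_ ?_ ?_ ?_ hx
    · rintro y ⟨v, rfl⟩; exact hσg v
    · exact map_zero σ
    · intro y z _ _ hy hz; rw [map_add, hy, hz, add_zero]
    · intro r y _ hy; rw [map_smul, hy, smul_zero]
  obtain ⟨v0⟩ := ‹Nonempty V›
  have h1 : σ (Pi.single v0 (1 : ZMod 2)) = 1 := hσsingle v0
  rw [hσzero] at h1
  exact absurd h1 (by decide)
end

section
/- Let M be a {0,1}-matrix with k diagonal zeros and ℓ = 0 diagonal ones. If D is a minimal M-obstruction with no pair of false twins, then |V(D)| ≤ k + 1. -/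
set_option maxRecDepth 8000

variable {V : Type*}

section Aux

open Finset

private lemma zmod2_add_self : ∀ x : ZMod 2, x + x = 0 := by decide

private lemma zmod2_one_add_one : (1 : ZMod 2) + 1 = 0 := by decide

private lemma zmod2_cancel : ∀ a b : ZMod 2, a * b = 0 → b ≠ 0 → a = 0 := by decide

open Classical in
/-- The in/out indicator profile of a vertex, over GF(2). -/
private noncomputable def phi (A : V → V → Prop) (u : V) : (V ⊕ V) → ZMod 2 :=
  Sum.elim (fun w => if A u w then 1 else 0) (fun w => if A w u then 1 else 0)

open Classical in
/-- Indicator vector of the pair `{Y v, Z v}`. -/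
private noncomputable def cvec (Y Z : V → V) (v : V) : V → ZMod 2 :=
  fun u => (if u = Y v then 1 else 0) + (if u = Z v then 1 else 0)

variable [Fintype V]

/-- Linear combination of profiles. -/
private noncomputable def Lmap (A : V → V → Prop) :
    (V → ZMod 2) →ₗ[ZMod 2] ((V ⊕ V) → ZMod 2) where
  toFun := fun d => ∑ u : V, d u • phi A u
  map_add' := by
    intro d e
    simp [add_smul, Finset.sum_add_distrib]
  map_smul' := by
    intro r d
    simp [Finset.smul_sum, smul_smul]

private lemma Lmap_apply (A : V → V → Prop) (d : V → ZMod 2) :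
    Lmap A d = ∑ u : V, d u • phi A u := rfl

/-- The coordinate-sum functional. -/
private noncomputable def sigmaF (V : Type*) [Fintype V] :
    (V → ZMod 2) →ₗ[ZMod 2] ZMod 2 where
  toFun := fun d => ∑ u : V, d u
  map_add' := by intro d e; simp [Finset.sum_add_distrib]
  map_smul' := by intro r d; simp [Finset.mul_sum]

private lemma sigmaF_apply (d : V → ZMod 2) : sigmaF V d = ∑ u : V, d u := rfl

/-- The GF(2) linear-algebra core: if for every vertex `v` there is a pair
`Y v, Z v` of vertices with identical in/out neighbourhoods except exactly at
`v` (where they differ), we get a contradiction. -/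
private lemma zmod2_core [Nonempty V]
    (A : V → V → Prop) (Y Z : V → V)
    (heq : ∀ v w, w ≠ v → ((A (Y v) w ↔ A (Z v) w) ∧ (A w (Y v) ↔ A w (Z v))))
    (hdiff : ∀ v, ¬ ((A (Y v) v ↔ A (Z v) v) ∧ (A v (Y v) ↔ A v (Z v)))) :
    False := by
  classical
  haveI : Fact (Nat.Prime 2) := ⟨by norm_num⟩
  have ifcongr : ∀ (p q : Prop) (_ : Decidable p) (_ : Decidable q), (p ↔ q) →
      (if p then (1 : ZMod 2) else 0) = (if q then (1 : ZMod 2) else 0) := by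
    intro p q _ _ h
    exact if_congr h rfl rfl
  have ifne : ∀ (p q : Prop) (_ : Decidable p) (_ : Decidable q), ¬ (p ↔ q) →
      (if p then (1 : ZMod 2) else 0) + (if q then (1 : ZMod 2) else 0) ≠ 0 := by
    intro p q _ _ h
    by_cases hp : p <;> by_cases hq : q
    · exact absurd (iff_of_true hp hq) h
    · simp [hp, hq]
    · simp [hp, hq]
    · exact absurd (iff_of_false hp hq) h
  have heval : ∀ v w, w ≠ v →
      (phi A (Y v) + phi A (Z v)) (Sum.inl w) = 0 ∧
      (phi A (Y v) + phi A (Z v)) (Sum.inr w) = 0 := by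
    intro v w hw
    obtain ⟨h1, h2⟩ := heq v w hw
    constructor
    · show (if A (Y v) w then (1 : ZMod 2) else 0) + (if A (Z v) w then (1 : ZMod 2) else 0) = 0
      rw [ifcongr _ _ _ _ h1]; exact zmod2_add_self _
    · show (if A w (Y v) then (1 : ZMod 2) else 0) + (if A w (Z v) then (1 : ZMod 2) else 0) = 0
      rw [ifcongr _ _ _ _ h2]; exact zmod2_add_self _
  have hnz : ∀ v,
      (phi A (Y v) + phi A (Z v)) (Sum.inl v) ≠ 0 ∨
      (phi A (Y v) + phi A (Z v)) (Sum.inr v) ≠ 0 := by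
    intro v
    rcases not_and_or.mp (hdiff v) with h | h
    · exact Or.inl (ifne _ _ _ _ h)
    · exact Or.inr (ifne _ _ _ _ h)
  have hLc : ∀ v, Lmap A (cvec Y Z v) = phi A (Y v) + phi A (Z v) := by
    intro v
    rw [Lmap_apply]
    show (∑ u : V, ((if u = Y v then (1 : ZMod 2) else 0)
        + (if u = Z v then (1 : ZMod 2) else 0)) • phi A u)
        = phi A (Y v) + phi A (Z v)
    simp [add_smul, Finset.sum_add_distrib, ite_smul, Finset.sum_ite_eq']
  have hindep : LinearIndependent (ZMod 2) (cvec Y Z) := by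
    rw [Fintype.linearIndependent_iff]
    intro g hg v₀
    have hg' : ∑ v : V, g v • (phi A (Y v) + phi A (Z v)) = 0 := by
      have h := congrArg (Lmap A) hg
      rw [map_sum, map_zero] at h
      simp only [map_smul, hLc] at h
      exact h
    have hterm : ∀ s : V ⊕ V,
        (∑ v : V, g v • (phi A (Y v) + phi A (Z v))) s
          = ∑ v : V, g v * ((phi A (Y v) + phi A (Z v)) s) := by
      intro s
      rw [Finset.sum_apply]
      simp [smul_eq_mul]
    have e1 : g v₀ * ((phi A (Y v₀) + phi A (Z v₀)) (Sum.inl v₀)) = 0 := by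
      have h := congrFun hg' (Sum.inl v₀)
      rw [hterm] at h
      rw [Finset.sum_eq_single v₀] at h
      · exact h
      · intro v _ hv
        rw [(heval v v₀ (Ne.symm hv)).1, mul_zero]
      · intro h'; exact absurd (Finset.mem_univ v₀) h'
    have e2 : g v₀ * ((phi A (Y v₀) + phi A (Z v₀)) (Sum.inr v₀)) = 0 := by
      have h := congrFun hg' (Sum.inr v₀)
      rw [hterm] at h
      rw [Finset.sum_eq_single v₀] at h
      · exact h
      · intro v _ hv
        rw [(heval v v₀ (Ne.symm hv)).2, mul_zero]
      · intro h'; exact absurd (Finset.mem_univ v₀) h'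
    rcases hnz v₀ with h | h
    · exact zmod2_cancel _ _ e1 h
    · exact zmod2_cancel _ _ e2 h
  have hker : ∀ v, cvec Y Z v ∈ LinearMap.ker (sigmaF V) := by
    intro v
    rw [LinearMap.mem_ker, sigmaF_apply]
    show (∑ u : V, ((if u = Y v then (1 : ZMod 2) else 0)
        + (if u = Z v then (1 : ZMod 2) else 0))) = 0
    rw [Finset.sum_add_distrib]
    simp only [Finset.sum_ite_eq', Finset.mem_univ, if_true]
    exact zmod2_one_add_one
  have hindep' : LinearIndependent (ZMod 2)
      (fun v => (⟨cvec Y Z v, hker v⟩ : LinearMap.ker (sigmaF V))) :=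
    LinearIndependent.of_comp (LinearMap.ker (sigmaF V)).subtype hindep
  have hcard : Fintype.card V ≤ Module.finrank (ZMod 2) (LinearMap.ker (sigmaF V)) :=
    hindep'.fintype_card_le_finrank
  have hsurj : Function.Surjective (sigmaF V) := by
    intro x
    refine ⟨fun u => if u = Classical.arbitrary V then x else 0, ?_⟩
    rw [sigmaF_apply]
    simp [Finset.sum_ite_eq']
  have hrn := LinearMap.finrank_range_add_finrank_ker (sigmaF V)
  rw [LinearMap.range_eq_top.mpr hsurj, finrank_top, Module.finrank_self,
    Module.finrank_fintype_fun_eq_card] at hrn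
  have hpos : 0 < Fintype.card V := Fintype.card_pos
  omega

end Aux

theorem stmt6 [Fintype V] {k : ℕ} (A : V → V → Prop) (hirr : ∀ v, ¬ A v v)
    (M : Fin k → Fin k → Bool) (hdiag : ∀ i : Fin k, M i i = false)
    (hobs : MinimalObstruction A M)
    (hft : ∀ u v : V, ¬ FalseTwinsOn A Set.univ u v) :
    Fintype.card V ≤ k + 1 := by
  classical
  by_contra hcard
  push_neg at hcard
  have hk2 : k + 2 ≤ Fintype.card V := hcard
  haveI : Nonempty V := by
    rw [← Fintype.card_pos_iff]; omega
  -- Step 1: for every vertex `v`, there are false twins in `D - v`.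
  have step1 : ∀ v : V, ∃ y z, FalseTwinsOn A {v}ᶜ y z := by
    intro v
    obtain ⟨P, hsub, huniq, harcs⟩ := hobs.2 v
    have hmem : ∀ w : {w : V // w ≠ v}, (w : V) ∈ ({v}ᶜ : Set V) := by
      intro w
      exact Set.mem_compl_singleton_iff.mpr w.2
    have hexu : ∀ w : {w : V // w ≠ v}, ∃! i, (w : V) ∈ P i := fun w => huniq w (hmem w)
    set f : {w : V // w ≠ v} → Fin k := fun w => Classical.choose (hexu w).exists with hf
    have hfmem : ∀ w, (w : V) ∈ P (f w) := fun w => Classical.choose_spec (hexu w).exists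
    have hcardlt : Fintype.card (Fin k) < Fintype.card {w : V // w ≠ v} := by
      have h1 : Fintype.card {w : V // w ≠ v} = Fintype.card V - 1 := by
        have := Fintype.card_subtype_compl (fun w : V => w = v)
        rw [Fintype.card_subtype_eq] at this
        exact this
      rw [h1, Fintype.card_fin]
      omega
    obtain ⟨a, b, hab, hfab⟩ := Fintype.exists_ne_map_eq_of_card_lt f hcardlt
    have hamem : (a : V) ∈ P (f a) := hfmem a
    have hbmem : (b : V) ∈ P (f a) := by rw [hfab]; exact hfmem b
    have habne : (a : V) ≠ (b : V) := fun h => hab (Subtype.ext h)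
    -- the part index of any vertex of `D - v`
    have partarcs : ∀ (u u' : V) (hu : u ≠ v) (hu' : u' ≠ v) (j j' : Fin k),
        u ∈ P j → u' ∈ P j' → u ≠ u' → (A u u' ↔ M j j' = true) := by
      intro u u' hu hu' j j' hj hj' hne
      exact harcs j j' u hj u' hj' hne
    refine ⟨a, b, hmem a, hmem b, habne, ?_, ?_, ?_⟩
    · intro hA
      have := (harcs (f a) (f a) a hamem b hbmem habne).mp hA
      rw [hdiag (f a)] at this
      exact Bool.false_ne_true this
    · intro hA
      have := (harcs (f a) (f a) b hbmem a hamem habne.symm).mp hA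
      rw [hdiag (f a)] at this
      exact Bool.false_ne_true this
    · intro w hw hdist
      obtain ⟨hwa, hwb, hor⟩ := hdist
      have hwv : w ≠ v := Set.mem_compl_singleton_iff.mp hw
      obtain ⟨j, hj, _⟩ := huniq w hw
      have h1 : A (a : V) w ↔ M (f a) j = true := harcs (f a) j a hamem w hj (Ne.symm hwa)
      have h2 : A (b : V) w ↔ M (f a) j = true := harcs (f a) j b hbmem w hj (Ne.symm hwb)
      have h3 : A w (a : V) ↔ M j (f a) = true := harcs j (f a) w hj a hamem hwa
      have h4 : A w (b : V) ↔ M j (f a) = true := harcs j (f a) w hj b hbmem hwb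
      tauto
  -- Step 2: extract, for every `v`, a pair differing exactly at `v`.
  have step2 : ∀ v : V, ∃ y z : V,
      (∀ w, w ≠ v → ((A y w ↔ A z w) ∧ (A w y ↔ A w z))) ∧
      ¬ ((A y v ↔ A z v) ∧ (A v y ↔ A v z)) := by
    intro v
    obtain ⟨y, z, hyU, hzU, hyz, hAyz, hAzy, hnd⟩ := step1 v
    -- some vertex distinguishes y and z in D; it must be v
    have hdistv : Distinguishes A v y z := by
      by_contra h
      apply hft y z
      refine ⟨Set.mem_univ y, Set.mem_univ z, hyz, hAyz, hAzy, ?_⟩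
      intro w _
      by_cases hwv : w = v
      · rw [hwv]; exact h
      · exact hnd w (Set.mem_compl_singleton_iff.mpr hwv)
    obtain ⟨hvy, hvz, hor⟩ := hdistv
    refine ⟨y, z, ?_, ?_⟩
    · intro w hwv
      by_cases hwy : w = y
      · subst hwy
        constructor
        · exact iff_of_false (hirr w) hAzy
        · exact iff_of_false (hirr w) hAyz
      · by_cases hwz : w = z
        · subst hwz
          constructor
          · exact iff_of_false hAyz (hirr w)
          · exact iff_of_false hAzy (hirr w)
        · have := hnd w (Set.mem_compl_singleton_iff.mpr hwv)
          unfold Distinguishes at this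
          push_neg at this
          have hcases := this hwy hwz
          tauto
    · tauto
  choose Y Z h1 h2 using step2
  exact zmod2_core A Y Z (fun v w hw => h1 v w hw) h2
end

section
/- Let M be a {0,1}-matrix with k diagonal zeros and ℓ diagonal ones with kℓ > 0, and let D be a minimal M-obstruction. If D contains neither a pair of false twins nor a pair of true twins, then |V(D)| ≤ (k+1)(ℓ+1). -/
variable {V : Type*}

/-! Fix for every vertex `z` an `M`-partition of `D - z`. Two vertices `u, v` in a common part of
it are twins in `D - z`; since `D` is twin-free, `z` is the unique vertex of `D` distinguishing
them. Hence the sets of ordered same-part pairs for different `z` are disjoint, while by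
pigeonhole each has at least `2 (n - 1) - 2 (k + ℓ)` elements, so `n ≤ 2 (k + ℓ) + 1`. In the
extremal case every pair shares a part for some `z`; then `D` is symmetric and every pair `u ≠ v`
has exactly one distinguishing vertex, which makes `deg u + deg v` odd for all `u ≠ v`:
impossible on three vertices. Finally `2 (k + ℓ) ≤ (k + 1) (ℓ + 1)` as `kℓ > 0`. -/

open Finset

section SameColorPairs

variable {α β : Type*} [DecidableEq β]

def sameColorPairs [DecidableEq α] (c : α → β) (s : Finset α) : Finset (α × α) :=
  s.offDiag.filter fun p => c p.1 = c p.2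

@[simp]
lemma mem_sameColorPairs [DecidableEq α] {c : α → β} {s : Finset α} {p : α × α} :
    p ∈ sameColorPairs c s ↔ p.1 ∈ s ∧ p.2 ∈ s ∧ p.1 ≠ p.2 ∧ c p.1 = c p.2 := by
  simp [sameColorPairs, and_assoc]

lemma two_mul_le_mul_self_sub_add_two (t : ℕ) : 2 * t ≤ t * t - t + 2 := by
  have : t ≤ t * t := Nat.le_mul_self t
  zify [this]
  nlinarith [sq_nonneg ((t : ℤ) - 1), sq_nonneg ((t : ℤ) - 2)]

lemma card_sameColorPairs_eq_sum [DecidableEq α] [Fintype β] (c : α → β) (s : Finset α) :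
    #(sameColorPairs c s) = ∑ b, #({a ∈ s | c a = b}.offDiag) := by
  rw [card_eq_sum_card_fiberwise (f := fun p => c p.1) (t := univ) (by simp)]
  refine sum_congr rfl fun b _ => congrArg card ?_
  ext ⟨x, y⟩
  simp only [mem_filter, mem_sameColorPairs, mem_offDiag]
  constructor
  · rintro ⟨⟨hx, hy, hxy, hc⟩, rfl⟩
    exact ⟨⟨hx, rfl⟩, ⟨hy, hc.symm⟩, hxy⟩
  · rintro ⟨⟨hx, rfl⟩, ⟨hy, hc⟩, hxy⟩
    exact ⟨⟨hx, hy, hxy, hc.symm⟩, rfl⟩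

/-- Pigeonhole: each colour class of size `t` contributes `t (t - 1) ≥ 2 t - 2` pairs. -/
lemma two_mul_card_le_card_sameColorPairs_add [DecidableEq α] [Fintype β] (c : α → β)
    (s : Finset α) :
    2 * #s ≤ #(sameColorPairs c s) + 2 * Fintype.card β := by
  calc 2 * #s = ∑ b, 2 * #{a ∈ s | c a = b} := by
        rw [← mul_sum, card_eq_sum_card_fiberwise (f := c) (t := univ) (by simp)]
    _ ≤ ∑ b, (#({a ∈ s | c a = b}.offDiag) + 2) :=
        sum_le_sum fun b _ => (offDiag_card _).symm ▸ two_mul_le_mul_self_sub_add_two _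
    _ = #(sameColorPairs c s) + 2 * Fintype.card β := by
        rw [sum_add_distrib, card_sameColorPairs_eq_sum, sum_const, card_univ, smul_eq_mul,
          mul_comm]

lemma card_offDiag_univ [Fintype α] :
    #(univ.offDiag : Finset (α × α)) = Fintype.card α * (Fintype.card α - 1) := by
  rw [offDiag_card, card_univ, Nat.mul_sub_one]

variable [DecidableEq α] [Fintype α] (c : α → α → β)

lemma biUnion_sameColorPairs_subset_offDiag :
    univ.biUnion (fun z => sameColorPairs (c z) (univ.erase z)) ⊆ univ.offDiag :=
  biUnion_subset.mpr fun z _ p hp => by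
    simp only [mem_sameColorPairs] at hp
    simp [hp.2.2.1]

variable [Fintype β] {c}

lemma card_mul_two_mul_sub_one_le
    (hdisj : (Set.univ : Set α).PairwiseDisjoint fun z => sameColorPairs (c z) (univ.erase z)) :
    Fintype.card α * (2 * (Fintype.card α - 1)) ≤
      #(univ.biUnion fun z => sameColorPairs (c z) (univ.erase z)) +
        Fintype.card α * (2 * Fintype.card β) :=
  calc Fintype.card α * (2 * (Fintype.card α - 1)) = ∑ z : α, 2 * #(univ.erase z) := by
        simp [card_erase_of_mem]
    _ ≤ ∑ z : α, (#(sameColorPairs (c z) (univ.erase z)) + 2 * Fintype.card β) :=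
        sum_le_sum fun z _ => two_mul_card_le_card_sameColorPairs_add _ _
    _ = _ := by
        rw [sum_add_distrib, card_biUnion (by simpa using hdisj)]
        simp

lemma card_le_two_mul_card_add_one
    (hdisj : (Set.univ : Set α).PairwiseDisjoint fun z => sameColorPairs (c z) (univ.erase z)) :
    Fintype.card α ≤ 2 * Fintype.card β + 1 := by
  have hlower := card_mul_two_mul_sub_one_le hdisj
  have hupper :=
    card_offDiag_univ (α := α) ▸ card_le_card (biUnion_sameColorPairs_subset_offDiag c)
  rcases Nat.eq_zero_or_pos (Fintype.card α) with h | h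
  · omega
  · have : Fintype.card α * (Fintype.card α - 1) ≤ Fintype.card α * (2 * Fintype.card β) := by
      nlinarith
    have := Nat.le_of_mul_le_mul_left this h
    omega

lemma biUnion_sameColorPairs_eq_offDiag
    (hdisj : (Set.univ : Set α).PairwiseDisjoint fun z => sameColorPairs (c z) (univ.erase z))
    (hcard : Fintype.card α = 2 * Fintype.card β + 1) :
    univ.biUnion (fun z => sameColorPairs (c z) (univ.erase z)) = univ.offDiag := by
  refine eq_of_subset_of_card_le (biUnion_sameColorPairs_subset_offDiag c) ?_
  have hlower := card_mul_two_mul_sub_one_le hdisj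
  have hsub : Fintype.card α - 1 = 2 * Fintype.card β := by omega
  rw [hsub] at hlower
  rw [card_offDiag_univ, hsub]
  linarith

end SameColorPairs

section Coloring

variable {A : V → V → Prop} {n : ℕ} {M : Fin n → Fin n → Bool}

/-- `c v` is the index of the part containing `v` in an `M`-partition of `U`. -/
def IsMColoringOn (A : V → V → Prop) (M : Fin n → Fin n → Bool) (U : Set V) (c : V → Fin n) :
    Prop :=
  ∀ u ∈ U, ∀ v ∈ U, u ≠ v → (A u v ↔ M (c u) (c v) = true)

lemma HasMPartitionOn.exists_isMColoringOn [Nonempty (Fin n)] {U : Set V}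
    (h : HasMPartitionOn A M U) : ∃ c, IsMColoringOn A M U c := by
  obtain ⟨P, -, hcover, hadj⟩ := h
  have hmem : ∀ v ∈ U, v ∈ P (Classical.epsilon fun i => v ∈ P i) := fun v hv =>
    Classical.epsilon_spec (hcover v hv).exists
  exact ⟨_, fun u hu v hv huv => hadj _ _ u (hmem u hu) v (hmem v hv) huv⟩

namespace IsMColoringOn

variable {U : Set V} {c : V → Fin n} {u v : V}

lemma not_distinguishes (hc : IsMColoringOn A M U c) (hu : u ∈ U) (hv : v ∈ U) (hcuv : c u = c v)
    {w : V} (hw : w ∈ U) : ¬ Distinguishes A w u v := by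
  rintro ⟨hwu, hwv, h⟩
  have h1 := hc u hu w hw (Ne.symm hwu)
  have h2 := hc v hv w hw (Ne.symm hwv)
  have h3 := hc w hw u hu hwu
  have h4 := hc w hw v hv hwv
  rw [hcuv] at h1 h3
  tauto

lemma adj_comm_of_eq (hc : IsMColoringOn A M U c) (hu : u ∈ U) (hv : v ∈ U) (huv : u ≠ v)
    (hcuv : c u = c v) : A u v ↔ A v u := by
  rw [hc u hu v hv huv, hc v hv u hu huv.symm, hcuv]

end IsMColoringOn

lemma distinguishes_iff_eq_of_isMColoringOn_compl
    (hft : ∀ u v : V, ¬ FalseTwinsOn A Set.univ u v) (htt : ∀ u v : V, ¬ TrueTwinsOn A Set.univ u v)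
    {z u v : V} {c : V → Fin n} (hc : IsMColoringOn A M {z}ᶜ c) (hu : u ≠ z) (hv : v ≠ z)
    (huv : u ≠ v) (hcuv : c u = c v) (w : V) : Distinguishes A w u v ↔ w = z := by
  refine ⟨fun hw => by_contra fun hwz => hc.not_distinguishes hu hv hcuv hwz hw, ?_⟩
  rintro rfl
  by_contra hz
  have hnone : ∀ x, x ∈ Set.univ → ¬ Distinguishes A x u v := fun x _ hx => by
    rcases eq_or_ne x w with rfl | hxw
    · exact hz hx
    · exact hc.not_distinguishes hu hv hcuv hxw hx
  have hAuv := hc u hu v hv huv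
  have hAvu := hc v hv u hu huv.symm
  rw [hcuv] at hAuv hAvu
  cases hM : M (c v) (c v)
  · exact hft u v ⟨trivial, trivial, huv, by simp_all, by simp_all, hnone⟩
  · exact htt u v ⟨trivial, trivial, huv, hAuv.mpr hM, hAvu.mpr hM, hnone⟩

end Coloring

section Parity

lemma exists_ne_even_add [Fintype V] (hV : 2 < Fintype.card V) (d : V → ℕ) :
    ∃ u v, u ≠ v ∧ Even (d u + d v) := by
  obtain ⟨u, v, huv, h⟩ :=
    Fintype.exists_ne_map_eq_of_card_lt (fun v => decide (Even (d v))) (by simpa using hV)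
  exact ⟨u, v, huv, Nat.even_add.mpr (by simpa using h)⟩

variable [Fintype V] [DecidableEq V]

lemma odd_card_filter_add_card_filter {p q : V → Prop} [DecidablePred p] [DecidablePred q] (z : V)
    (hpq : ∀ w ≠ z, p w ↔ q w) (hz : ¬ (p z ↔ q z)) : Odd (#{w | p w} + #{w | q w}) := by
  have hsplit : ∀ (r : V → Prop) [DecidablePred r],
      #{w | r w} = (if r z then 1 else 0) + ∑ w ∈ univ.erase z, if r w then 1 else 0 :=
    fun r _ => by rw [card_filter]; exact (add_sum_erase _ _ (mem_univ z)).symm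
  have hrest : ∑ w ∈ univ.erase z, (if p w then 1 else 0) =
      ∑ w ∈ univ.erase z, if q w then 1 else 0 :=
    sum_congr rfl fun w hw => if_congr (hpq w (ne_of_mem_erase hw)) rfl rfl
  have hone : (if p z then 1 else 0) + (if q z then 1 else 0) = 1 := by split_ifs <;> tauto
  rw [hsplit p, hsplit q, hrest]
  exact ⟨∑ w ∈ univ.erase z, if q w then 1 else 0, by omega⟩

/-- Swapping `u` and `v` matches the out-neighbours of `u` with those of `v` except at `z`. -/
lemma odd_card_add_card_of_distinguishes_iff {A : V → V → Prop} [DecidableRel A]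
    (hirr : ∀ v, ¬ A v v) (hsymm : ∀ u v, A u v → A v u) {u v z : V} (huv : u ≠ v)
    (hz : ∀ w, Distinguishes A w u v ↔ w = z) : Odd (#{w | A u w} + #{w | A v w}) := by
  rw [← card_equiv (s := {w | A v (Equiv.swap u v w)}) (t := {w | A v w}) (Equiv.swap u v)
    fun w => by simp]
  obtain ⟨hzu, hzv, hdist⟩ := (hz z).mpr rfl
  refine odd_card_filter_add_card_filter z (fun w hwz => ?_) ?_
  · rcases eq_or_ne w u with rfl | hwu
    · simp [hirr w, hirr v]
    rcases eq_or_ne w v with rfl | hwv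
    · rw [Equiv.swap_apply_right]
      exact ⟨hsymm _ _, hsymm _ _⟩
    have hnd : ¬ Distinguishes A w u v := fun h => hwz ((hz w).mp h)
    rw [Equiv.swap_apply_of_ne_of_ne hwu hwv]
    unfold Distinguishes at hnd
    tauto
  · have hzu' : A z u ↔ A u z := ⟨hsymm _ _, hsymm _ _⟩
    have hzv' : A z v ↔ A v z := ⟨hsymm _ _, hsymm _ _⟩
    rw [Equiv.swap_apply_of_ne_of_ne hzu hzv]
    rw [hzu', hzv'] at hdist
    tauto

end Parity

section Obstruction

variable [Fintype V] [DecidableEq V] {A : V → V → Prop} {n : ℕ} {M : Fin n → Fin n → Bool}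
  {c : V → V → Fin n}

lemma pairwiseDisjoint_sameColorPairs
    (hft : ∀ u v : V, ¬ FalseTwinsOn A Set.univ u v) (htt : ∀ u v : V, ¬ TrueTwinsOn A Set.univ u v)
    (hc : ∀ z, IsMColoringOn A M {z}ᶜ (c z)) :
    (Set.univ : Set V).PairwiseDisjoint fun z => sameColorPairs (c z) (univ.erase z) := by
  intro z _ z' _ hzz'
  refine disjoint_left.mpr fun p hp hp' => hzz' ?_
  simp only [mem_sameColorPairs, mem_erase, mem_univ, and_true] at hp hp'
  have h :=
    distinguishes_iff_eq_of_isMColoringOn_compl hft htt (hc z) hp.1 hp.2.1 hp.2.2.1 hp.2.2.2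
  have h' :=
    distinguishes_iff_eq_of_isMColoringOn_compl hft htt (hc z') hp'.1 hp'.2.1 hp'.2.2.1 hp'.2.2.2
  exact ((h z').mp ((h' z').mpr rfl)).symm

lemma biUnion_sameColorPairs_ne_offDiag (hirr : ∀ v, ¬ A v v)
    (hft : ∀ u v : V, ¬ FalseTwinsOn A Set.univ u v) (htt : ∀ u v : V, ¬ TrueTwinsOn A Set.univ u v)
    (hV : 2 < Fintype.card V) (hc : ∀ z, IsMColoringOn A M {z}ᶜ (c z)) :
    univ.biUnion (fun z => sameColorPairs (c z) (univ.erase z)) ≠ univ.offDiag := by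
  intro hcover
  have hpair : ∀ u v : V, u ≠ v → ∃ z, u ≠ z ∧ v ≠ z ∧ c z u = c z v := by
    intro u v huv
    have hmem : (u, v) ∈ univ.biUnion fun z => sameColorPairs (c z) (univ.erase z) := by
      simpa [hcover] using huv
    simpa [and_assoc, huv] using hmem
  have hsymm : ∀ u v, A u v → A v u := by
    intro u v h
    rcases eq_or_ne u v with rfl | huv
    · exact h
    obtain ⟨z, hu, hv, hcuv⟩ := hpair u v huv
    exact ((hc z).adj_comm_of_eq hu hv huv hcuv).mp h
  classical
  obtain ⟨u, v, huv, heven⟩ := exists_ne_even_add hV fun w => #{x | A w x}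
  obtain ⟨z, hu, hv, hcuv⟩ := hpair u v huv
  exact Nat.not_even_iff_odd.mpr (odd_card_add_card_of_distinguishes_iff hirr hsymm huv
    (distinguishes_iff_eq_of_isMColoringOn_compl hft htt (hc z) hu hv huv hcuv)) heven

end Obstruction

theorem stmt7_general [Fintype V] {k l : ℕ} (A : V → V → Prop) (hirr : ∀ v, ¬ A v v)
    (M : Fin (k + l) → Fin (k + l) → Bool)
    (hk : 0 < k) (hl : 0 < l)
    (hobs : MinimalObstruction A M)
    (hft : ∀ u v : V, ¬ FalseTwinsOn A Set.univ u v)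
    (htt : ∀ u v : V, ¬ TrueTwinsOn A Set.univ u v) :
    Fintype.card V ≤ (k + 1) * (l + 1) := by
  classical
  have : Nonempty (Fin (k + l)) := ⟨⟨0, by omega⟩⟩
  choose c hc using fun z => (hobs.2 z).exists_isMColoringOn
  have hdisj := pairwiseDisjoint_sameColorPairs hft htt hc
  have hle : Fintype.card V ≤ 2 * (k + l) + 1 := by
    simpa using card_le_two_mul_card_add_one hdisj
  have hne : Fintype.card V ≠ 2 * (k + l) + 1 := fun h =>
    biUnion_sameColorPairs_ne_offDiag hirr hft htt (by omega) hc
      (biUnion_sameColorPairs_eq_offDiag hdisj (by simpa using h))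
  calc Fintype.card V ≤ 2 * (k + l) := by omega
    _ ≤ (k + 1) * (l + 1) := by nlinarith

theorem stmt7 [Fintype V] {k l : ℕ} (A : V → V → Prop) (hirr : ∀ v, ¬ A v v)
    (M : Fin (k + l) → Fin (k + l) → Bool)
    (hdiag : ∀ i : Fin (k + l), M i i = true ↔ k ≤ (i : ℕ))
    (hk : 0 < k) (hl : 0 < l)
    (hobs : MinimalObstruction A M)
    (hft : ∀ u v : V, ¬ FalseTwinsOn A Set.univ u v)
    (htt : ∀ u v : V, ¬ TrueTwinsOn A Set.univ u v) :
    Fintype.card V ≤ (k + 1) * (l + 1) :=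
  stmt7_general A hirr M hk hl hobs hft htt
end

section
/- Let M be a {0,1}-matrix with k diagonal zeros and ℓ diagonal ones, and D a minimal M-obstruction. If S is a homogeneous strong clique of D, then |S| ≤ k + 1. -/
variable {V : Type*}

/-!
Suppose `|S| ≥ k + 2`, pick `v ∈ S` and an `M`-partition of `D - v`. If some other vertex `u` of
`S` lies in a clique part, then `v`, a true twin of `u`, can be added to that part, giving an
`M`-partition of `D`. Otherwise the `k + 1` vertices of `S - v` lie in independent parts, of which
there are only `k`, so two of them share an independent part although they are adjacent.
-/

open Finset

variable {A : V → V → Prop}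

theorem Distinguishes.of_not_iff_in {w u v : V} (hwu : w ≠ u) (hwv : w ≠ v)
    (h : ¬ (A u w ↔ A v w)) : Distinguishes A w u v :=
  ⟨hwu, hwv, by tauto⟩

theorem Distinguishes.of_not_iff_out {w u v : V} (hwu : w ≠ u) (hwv : w ≠ v)
    (h : ¬ (A w u ↔ A w v)) : Distinguishes A w u v :=
  ⟨hwu, hwv, by tauto⟩

theorem StrongClique.mono {S T : Set V} (hS : StrongClique A S) (hTS : T ⊆ S) :
    StrongClique A T :=
  fun u hu v hv huv => hS u (hTS hu) v (hTS hv) huv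

theorem Set.mem_update_insert {ι α : Type*} [DecidableEq ι] {P : ι → Set α} {v x : α}
    {i j : ι} : x ∈ Function.update P i (insert v (P i)) j ↔ (j = i ∧ x = v) ∨ x ∈ P j := by
  by_cases hji : j = i
  · subst hji; simp
  · simp [hji]

namespace IsMPartitionOn

variable {n : ℕ} {M : Fin n → Fin n → Bool} {U : Set V} {P : Fin n → Set V}

theorem index_unique (hP : IsMPartitionOn A M U P) {u : V} {i j : Fin n} (hi : u ∈ P i)
    (hj : u ∈ P j) : i = j :=
  (hP.2.1 u (hP.1 i hi)).unique hi hj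

theorem insert_twin (hP : IsMPartitionOn A M U P) {u v : V} {i : Fin n} (hv : v ∉ U)
    (hu : u ∈ P i) (hMi : M i i = true) (huv : A u v) (hvu : A v u)
    (htwin : ∀ w, ¬ Distinguishes A w u v) :
    IsMPartitionOn A M (insert v U) (Function.update P i (insert v (P i))) := by
  have hvP : ∀ j, v ∉ P j := fun j h => hv (hP.1 j h)
  have hne : ∀ {j y}, y ∈ P j → y ≠ v := by
    rintro j y hy rfl
    exact hvP j hy
  have hout : ∀ {b y}, y ∈ P b → (A v y ↔ M i b = true) := by
    intro b y hy
    by_cases hyu : y = u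
    · subst hyu; simp [hvu, hP.index_unique hy hu, hMi]
    · rw [← hP.2.2 i b u hu y hy (Ne.symm hyu)]
      by_contra h
      exact htwin y (.of_not_iff_in hyu (hne hy) (h ∘ Iff.symm))
  have hin : ∀ {a x}, x ∈ P a → (A x v ↔ M a i = true) := by
    intro a x hx
    by_cases hxu : x = u
    · subst hxu; simp [huv, hP.index_unique hx hu, hMi]
    · rw [← hP.2.2 a i x hx u hu hxu]
      by_contra h
      exact htwin x (.of_not_iff_out hxu (hne hx) (h ∘ Iff.symm))
  refine ⟨fun j x hx => ?_, fun x hx => ?_, fun a b x hx y hy hxy => ?_⟩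
  · rcases Set.mem_update_insert.1 hx with ⟨-, rfl⟩ | hx
    exacts [Set.mem_insert _ _, Set.mem_insert_of_mem _ (hP.1 j hx)]
  · rcases hx with rfl | hx
    · refine ⟨i, Set.mem_update_insert.2 (.inl ⟨rfl, rfl⟩), fun j hj => ?_⟩
      exact (Set.mem_update_insert.1 hj).elim And.left fun h => (hvP j h).elim
    · obtain ⟨j, hj, huniq⟩ := hP.2.1 x hx
      refine ⟨j, Set.mem_update_insert.2 (.inr hj), fun j' hj' => huniq j' ?_⟩
      exact (Set.mem_update_insert.1 hj').resolve_left fun h => hv (h.2 ▸ hx)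
  · rcases Set.mem_update_insert.1 hx with ⟨ha, rfl⟩ | hxP <;>
      rcases Set.mem_update_insert.1 hy with ⟨hb, rfl⟩ | hyP
    · exact absurd rfl hxy
    · exact ha ▸ hout hyP
    · exact hb ▸ hin hxP
    · exact hP.2.2 a b x hxP y hyP hxy

/-- Distinct vertices of a strong clique never share an independent part. -/
theorem card_le_of_strongClique (hP : IsMPartitionOn A M U P) {T : Finset V}
    (hT : StrongClique A T) (hTU : ↑T ⊆ U) (hind : ∀ t ∈ T, ∀ i, t ∈ P i → M i i = false) :
    #T ≤ #{i | M i i = false} := by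
  refine card_le_card_of_forall_subsingleton (fun t i => t ∈ P i) (fun t ht => ?_) ?_
  · obtain ⟨i, hi, -⟩ := hP.2.1 t (hTU ht)
    exact ⟨i, by simpa using hind t ht i hi, hi⟩
  · rintro i hi x ⟨hxT, hx⟩ y ⟨hyT, hy⟩
    by_contra hxy
    have hMi := (hP.2.2 i i x hx y hy hxy).1 (hT x hxT y hyT hxy).1
    simp [hMi] at hi

end IsMPartitionOn

theorem card_filter_diag_eq_false {k l : ℕ} {M : Fin (k + l) → Fin (k + l) → Bool}
    (hdiag : ∀ i : Fin (k + l), M i i = true ↔ k ≤ (i : ℕ)) :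
    #{i | M i i = false} = k := by
  rw [filter_congr fun i _ => show M i i = false ↔ (i : ℕ) < k by
    rw [← Bool.not_eq_true, hdiag]; omega, Fin.card_filter_val_lt]
  omega

theorem stmt10_general [Fintype V] {k l : ℕ} (A : V → V → Prop)
    (M : Fin (k + l) → Fin (k + l) → Bool)
    (hdiag : ∀ i : Fin (k + l), M i i = true ↔ k ≤ (i : ℕ))
    (hobs : MinimalObstruction A M)
    (S : Set V) (hhom : Homogeneous A S) (hsc : StrongClique A S) :
    S.ncard ≤ k + 1 := by
  classical
  by_contra! hcard
  obtain ⟨v, hv⟩ : S.Nonempty := Set.nonempty_of_ncard_ne_zero (by omega)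
  obtain ⟨P, hP⟩ := hobs.2 v
  by_cases hclique : ∃ u ∈ S, u ≠ v ∧ ∃ i, u ∈ P i ∧ M i i = true
  · obtain ⟨u, huS, huv, i, hu, hMi⟩ := hclique
    have hsym := hsc u huS v hv huv
    have hD := hP.insert_twin (by simp) hu hMi hsym.1 hsym.2 (hhom u huS v hv huv)
    rw [Set.insert_eq, Set.union_compl_self] at hD
    exact hobs.1 ⟨_, hD⟩
  · push Not at hclique
    have hT := hP.card_le_of_strongClique (T := (S \ {v}).toFinset)
      (by simpa using hsc.mono Set.sdiff_subset) (by simp)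
      (by simpa using fun t ht htv i hi => hclique t ht htv i hi)
    rw [card_filter_diag_eq_false hdiag, ← Set.ncard_eq_toFinset_card',
      Set.ncard_sdiff_singleton_of_mem hv] at hT
    omega

theorem stmt10 [Fintype V] {k l : ℕ} (A : V → V → Prop) (hirr : ∀ v, ¬ A v v)
    (M : Fin (k + l) → Fin (k + l) → Bool)
    (hdiag : ∀ i : Fin (k + l), M i i = true ↔ k ≤ (i : ℕ))
    (hobs : MinimalObstruction A M)
    (S : Set V) (hhom : Homogeneous A S) (hsc : StrongClique A S) :
    S.ncard ≤ k + 1 :=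
  stmt10_general A M hdiag hobs S hhom hsc
end

section
/- Let M be a {0,1}-matrix with k diagonal zeros and ℓ diagonal ones, and D a minimal M-obstruction. If S is a homogeneous independent set of D, then |S| ≤ ℓ + 1. -/
variable {V : Type*}

theorem stmt11 [Fintype V] {k l : ℕ} (A : V → V → Prop) (hirr : ∀ v, ¬ A v v)
    (M : Fin (k + l) → Fin (k + l) → Bool)
    (hdiag : ∀ i : Fin (k + l), M i i = true ↔ k ≤ (i : ℕ))
    (hobs : MinimalObstruction A M)
    (S : Set V) (hhom : Homogeneous A S) (hind : IndepSet A S) :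
    S.ncard ≤ l + 1 := by
  classical
  by_contra hcon
  push_neg at hcon
  have hS : S.Nonempty := by
    rcases S.eq_empty_or_nonempty with h | h
    · simp [h, Set.ncard_empty] at hcon
    · exact h
  obtain ⟨v, hv⟩ := hS
  obtain ⟨P, hPsub, hPuniq, hPadj⟩ := hobs.2 v
  have hTcard : l + 1 ≤ (S \ {v}).ncard := by
    rw [Set.ncard_diff_singleton_of_mem hv]
    omega
  -- there is a vertex of S \ {v} in an independent part
  have key : ∃ u, u ∈ S ∧ u ≠ v ∧ ∃ i, u ∈ P i ∧ M i i = false := by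
    by_contra hk
    push_neg at hk
    have g0 : ∀ t : ↥(S \ {v}), ∃ i, (t : V) ∈ P i ∧ M i i = true := by
      intro t
      have htv : (t : V) ≠ v := by
        have := t.2.2; simpa using this
      obtain ⟨i, hi, _⟩ := hPuniq t (by simpa using htv)
      refine ⟨i, hi, ?_⟩
      rcases Bool.eq_false_or_eq_true (M i i) with h | h
      · exact h
      · exact absurd h (hk t t.2.1 htv i hi)
    choose g hg1 hg2 using g0
    have ginj : Function.Injective
        (fun t => (⟨g t, hg2 t⟩ : {i : Fin (k + l) // M i i = true})) := by
      intro a b hab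
      simp only [Subtype.mk.injEq] at hab
      by_contra hne
      have hne' : (a : V) ≠ (b : V) := fun h => hne (Subtype.ext h)
      have hb' : (b : V) ∈ P (g a) := by rw [hab]; exact hg1 b
      have hAab := (hPadj (g a) (g a) a (hg1 a) b hb' hne').mpr (hg2 a)
      exact hind a a.2.1 b b.2.1 hne' hAab
    have e : {i : Fin (k + l) // M i i = true} ≃ Fin l :=
      { toFun := fun i => ⟨(i : Fin (k + l)).val - k, by
          have h1 := (hdiag i).mp i.2
          have h2 := (i : Fin (k + l)).isLt
          omega⟩
        invFun := fun j => ⟨⟨k + j.val, by omega⟩, (hdiag _).mpr (by simp)⟩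
        left_inv := fun i => by
          have h1 := (hdiag i).mp i.2
          apply Subtype.ext; apply Fin.ext; simp; omega
        right_inv := fun j => by apply Fin.ext; simp }
    have h1 : (S \ {v}).ncard = Nat.card ↥(S \ {v}) :=
      (Nat.card_coe_set_eq _).symm
    have h2 : Nat.card ↥(S \ {v}) ≤ Nat.card {i : Fin (k + l) // M i i = true} :=
      Nat.card_le_card_of_injective _ ginj
    have h3 : Nat.card {i : Fin (k + l) // M i i = true} = l := by
      rw [Nat.card_eq_fintype_card, Fintype.card_congr e, Fintype.card_fin]
    omega
  obtain ⟨u, huS, huv, i, hui, hMii⟩ := key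
  have twin : ∀ w, w ≠ u → w ≠ v → ((A u w ↔ A v w) ∧ (A w u ↔ A w v)) := by
    intro w hwu hwv
    have hd := hhom u huS v hv huv w
    have h3 : ¬ ((A u w ∧ ¬ A v w) ∨ (A v w ∧ ¬ A u w) ∨
        (A w u ∧ ¬ A w v) ∨ (A w v ∧ ¬ A w u)) := fun hc => hd ⟨hwu, hwv, hc⟩
    constructor <;> constructor <;> intro h <;> by_contra h' <;> exact h3 (by tauto)
  set P' : Fin (k + l) → Set V := fun j => if j = i then insert v (P i) else P j
    with hP'
  have hP'iff : ∀ j w, w ∈ P' j ↔ ((j = i ∧ (w = v ∨ w ∈ P i)) ∨ (j ≠ i ∧ w ∈ P j)) := by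
    intro j w
    by_cases hji : j = i <;> simp [hP', hji]
  refine absurd ?_ hobs.1
  refine ⟨P', fun j => Set.subset_univ _, ?_, ?_⟩
  · intro w _
    by_cases hw : w = v
    · refine ⟨i, (hP'iff i w).mpr (Or.inl ⟨rfl, Or.inl hw⟩), fun j hj => ?_⟩
      rcases (hP'iff j w).mp hj with ⟨h1, _⟩ | ⟨_, h2⟩
      · exact h1
      · exact absurd (by simp [hw]) (hPsub j h2)
    · obtain ⟨j, hj, huniq⟩ := hPuniq w (by simpa using hw)
      have hmemiff : ∀ j', w ∈ P' j' ↔ w ∈ P j' := by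
        intro j'
        rw [hP'iff]
        constructor
        · rintro (⟨rfl, h⟩ | ⟨_, h⟩)
          · rcases h with h | h
            · exact absurd h hw
            · exact h
          · exact h
        · intro h
          by_cases hji : j' = i
          · exact Or.inl ⟨hji, Or.inr (hji ▸ h)⟩
          · exact Or.inr ⟨hji, h⟩
      exact ⟨j, (hmemiff j).mpr hj, fun j' hj' => huniq j' ((hmemiff j').mp hj')⟩
  · intro j1 j2 a ha b hb hab
    have hvP' : ∀ j, v ∈ P' j → j = i := by
      intro j hj
      rcases (hP'iff j v).mp hj with ⟨h1, _⟩ | ⟨_, h2⟩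
      · exact h1
      · exact absurd rfl (hPsub j h2)
    have hP'mem : ∀ j w, w ∈ P' j → w ≠ v → w ∈ P j := by
      intro j w hwj hwv
      rcases (hP'iff j w).mp hwj with ⟨rfl, h⟩ | ⟨_, h⟩
      · rcases h with h | h
        · exact absurd h hwv
        · exact h
      · exact h
    by_cases hav : a = v
    · rw [hav] at ha hab ⊢
      have hj1 : j1 = i := hvP' _ ha
      rw [hj1] at ha ⊢
      have hbv : b ≠ v := Ne.symm hab
      have hb' : b ∈ P j2 := hP'mem _ _ hb hbv
      by_cases hbu : b = u
      · rw [hbu] at hb' ⊢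
        obtain ⟨j0, hj0, huq⟩ := hPuniq u (by simpa using huv)
        have hj2 : j2 = i := by rw [huq j2 hb', huq i hui]
        rw [hj2]
        simp only [hMii, Bool.false_eq_true, iff_false]
        exact hind v hv u huS (Ne.symm huv)
      · have ht := twin b hbu hbv
        have h := hPadj i j2 u hui b hb' (Ne.symm hbu)
        rw [← ht.1]
        exact h
    · by_cases hbv : b = v
      · rw [hbv] at hb hab ⊢
        have hj2 : j2 = i := hvP' _ hb
        rw [hj2] at hb ⊢
        have ha' : a ∈ P j1 := hP'mem _ _ ha hav
        by_cases hau : a = u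
        · rw [hau] at ha' ⊢
          obtain ⟨j0, hj0, huq⟩ := hPuniq u (by simpa using huv)
          have hj1 : j1 = i := by rw [huq j1 ha', huq i hui]
          rw [hj1]
          simp only [hMii, Bool.false_eq_true, iff_false]
          exact hind u huS v hv huv
        · have ht := twin a hau hav
          have h := hPadj j1 i a ha' u hui hau
          rw [← ht.2]
          exact h
      · exact hPadj j1 j2 a (hP'mem _ _ ha hav) b (hP'mem _ _ hb hbv) hab
end

section
/- Let M be a {0,1}-matrix with k ≥ 2 diagonal zeros and ℓ diagonal ones, and D a minimal M-obstruction. If D contains a homogeneous strong clique of size exactly k+1, then |V(D)| ≤ (k+1)(ℓ+1). -/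
variable {V : Type*}

/-!
Delete a vertex `s` of the homogeneous strong clique `S` and take an `M`-partition `P` of the
rest. A vertex of `S` that is a true twin of `s` cannot sit in a clique part, since `s` could
be added to that part; so the `k` vertices of `S \ {s}` occupy pairwise distinct independent
parts, i.e. exactly one vertex of each. As `S` is homogeneous and `k ≥ 2`, an independent part
contains nothing else. A clique part is a homogeneous strong clique of the whole digraph (`s`
behaves like its twin in an independent part), and the same twin argument bounds every
homogeneous strong clique by `k + 1`. Counting gives `|V| ≤ 1 + k + ℓ (k + 1)`.
-/

open Finset

theorem mem_update_insert_iff {ι : Type*} [DecidableEq ι] {P : ι → Set V} {i m : ι} {v x : V} :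
    v ∈ Function.update P m (insert x (P m)) i ↔ v ∈ P i ∨ (i = m ∧ v = x) := by
  by_cases h : i = m
  · subst h
    simp [or_comm]
  · simp [h]

section Twins

variable {A : V → V → Prop} {w w' u v : V}

theorem not_distinguishes_iff (hwu : w ≠ u) (hwv : w ≠ v) :
    ¬ Distinguishes A w u v ↔ (A u w ↔ A v w) ∧ (A w u ↔ A w v) := by
  unfold Distinguishes
  tauto

theorem Distinguishes.of_twin (h : Distinguishes A w u v)
    (htwin : ∀ z, ¬ Distinguishes A z w w') (hu : w' ≠ u) (hv : w' ≠ v) :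
    Distinguishes A w' u v := by
  have hu' := (not_distinguishes_iff h.1.symm hu.symm).1 (htwin u)
  have hv' := (not_distinguishes_iff h.2.1.symm hv.symm).1 (htwin v)
  unfold Distinguishes at h ⊢
  tauto

end Twins

namespace IsMPartitionOn

variable {A : V → V → Prop} {n : ℕ} {M : Fin n → Fin n → Bool} {U : Set V}
  {P : Fin n → Set V} {i j m : Fin n} {u v w x y : V}

theorem exists_mem (hP : IsMPartitionOn A M U P) (hv : v ∈ U) : ∃ i, v ∈ P i :=
  (hP.2.1 v hv).exists

theorem eq_of_mem (hP : IsMPartitionOn A M U P) (hi : v ∈ P i) (hj : v ∈ P j) : i = j :=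
  (hP.2.1 v (hP.1 i hi)).unique hi hj

theorem ne_of_mem (hP : IsMPartitionOn A M U P) (hu : u ∈ P i) (hv : v ∈ P j) (hij : i ≠ j) :
    u ≠ v := by
  rintro rfl
  exact hij (hP.eq_of_mem hu hv)

theorem adj_iff (hP : IsMPartitionOn A M U P) (hu : u ∈ P i) (hv : v ∈ P j) (huv : u ≠ v) :
    A u v ↔ M i j = true :=
  hP.2.2 i j u hu v hv huv

theorem not_adj_of_diag_false (hP : IsMPartitionOn A M U P) (hi : M i i = false)
    (hu : u ∈ P i) (hv : v ∈ P i) (huv : u ≠ v) : ¬ A u v := by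
  simp [hP.adj_iff hu hv huv, hi]

theorem strongClique (hP : IsMPartitionOn A M U P) (hj : M j j = true) : StrongClique A (P j) :=
  fun _ hu _ hv huv => ⟨(hP.adj_iff hu hv huv).2 hj, (hP.adj_iff hv hu huv.symm).2 hj⟩

theorem not_distinguishes (hP : IsMPartitionOn A M U P) (hw : w ∈ P i) (hu : u ∈ P j)
    (hv : v ∈ P j) : ¬ Distinguishes A w u v := fun hd =>
  (not_distinguishes_iff hd.1 hd.2.1).2
    ⟨by rw [hP.adj_iff hu hw hd.1.symm, hP.adj_iff hv hw hd.2.1.symm],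
      by rw [hP.adj_iff hw hu hd.1, hP.adj_iff hw hv hd.2.1]⟩ hd

theorem ncard_le_sum [Finite V] (hP : IsMPartitionOn A M U P) : U.ncard ≤ ∑ i, (P i).ncard :=
  (Set.ncard_le_ncard fun _ hv => Set.mem_iUnion.2 (hP.exists_mem hv)).trans
    (Set.ncard_iUnion_le_of_fintype P)

theorem ncard_le_one {S : Set V} (hP : IsMPartitionOn A M U P) (hS : Homogeneous A S)
    (hSc : StrongClique A S) (hij : i ≠ j) (hi : M i i = false) (hx : x ∈ S) (hxi : x ∈ P i)
    (hy : y ∈ S) (hyj : y ∈ P j) : (P i).ncard ≤ 1 := by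
  have hsub : P i ⊆ {x} := by
    intro u hu
    by_contra hux
    have hxy : x ≠ y := hP.ne_of_mem hxi hyj hij
    have huy : u ≠ y := hP.ne_of_mem hu hyj hij
    have hMij : M i j = true := (hP.adj_iff hxi hyj hxy).1 (hSc x hx y hy hxy).1
    have hAuy : A u y := (hP.adj_iff hu hyj huy).2 hMij
    have hAux : ¬ A u x := hP.not_adj_of_diag_false hi hu hxi hux
    exact hS x hx y hy hxy u ⟨hux, huy, Or.inr (Or.inr (Or.inr ⟨hAuy, hAux⟩))⟩
  exact (Set.ncard_le_ncard hsub).trans (Set.ncard_singleton x).le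

theorem insert_of_twin (hP : IsMPartitionOn A M U P) (hx : x ∉ U)
    (hy : y ∈ P m) (hm : M m m = true) (hxy : A x y) (hyx : A y x)
    (htwin : ∀ w, ¬ Distinguishes A w x y) :
    IsMPartitionOn A M (insert x U) (Function.update P m (insert x (P m))) := by
  have twin_adj : ∀ {j v}, v ∈ P j → (A x v ↔ M m j = true) ∧ (A v x ↔ M j m = true) := by
    intro j v hv
    by_cases hvy : v = y
    · subst hvy
      obtain rfl := hP.eq_of_mem hv hy
      simp [hxy, hyx, hm]
    · have hvx : v ≠ x := ne_of_mem_of_not_mem (hP.1 j hv) hx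
      obtain ⟨h₁, h₂⟩ := (not_distinguishes_iff hvx hvy).1 (htwin v)
      exact ⟨h₁.trans (hP.adj_iff hy hv (Ne.symm hvy)), h₂.trans (hP.adj_iff hv hy hvy)⟩
  refine ⟨fun i v hv => ?_, fun v hv => ?_, fun i j u hu v hv huv => ?_⟩
  · rcases mem_update_insert_iff.1 hv with hv | ⟨-, rfl⟩
    · exact Set.mem_insert_of_mem _ (hP.1 i hv)
    · exact Set.mem_insert _ _
  · rcases Set.mem_insert_iff.1 hv with rfl | hvU
    · refine ⟨m, mem_update_insert_iff.2 (Or.inr ⟨rfl, rfl⟩), fun j hj => ?_⟩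
      rcases mem_update_insert_iff.1 hj with hj | ⟨rfl, -⟩
      · exact absurd (hP.1 j hj) hx
      · rfl
    · obtain ⟨i, hi, huniq⟩ := hP.2.1 v hvU
      refine ⟨i, mem_update_insert_iff.2 (Or.inl hi), fun j hj => ?_⟩
      rcases mem_update_insert_iff.1 hj with hj | ⟨-, hvx⟩
      · exact huniq j hj
      · exact absurd (hvx ▸ hvU) hx
  · rcases mem_update_insert_iff.1 hu with hu' | ⟨rfl, rfl⟩ <;>
      rcases mem_update_insert_iff.1 hv with hv' | ⟨rfl, rfl⟩
    · exact hP.adj_iff hu' hv' huv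
    · exact (twin_adj hu').2
    · exact (twin_adj hv').1
    · exact absurd rfl huv

theorem diag_false_of_twin (hno : ¬ HasMPartitionOn A M Set.univ)
    (hP : IsMPartitionOn A M {x}ᶜ P) (hy : y ∈ P m) (hxy : A x y) (hyx : A y x)
    (htwin : ∀ w, ¬ Distinguishes A w x y) : M m m = false := by
  by_contra hm
  have hext := hP.insert_of_twin (by simp) hy (by simpa using hm) hxy hyx htwin
  rw [Set.insert_eq, Set.union_compl_self] at hext
  exact hno ⟨_, hext⟩

theorem homogeneous_of_twin {s : V} {b : Fin n} (hP : IsMPartitionOn A M {s}ᶜ P)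
    (hx : x ∈ P b) (hbj : b ≠ j) (htwin : ∀ w, ¬ Distinguishes A w s x) :
    Homogeneous A (P j) := by
  intro u hu v hv _ w hd
  by_cases hws : w = s
  · subst hws
    exact hP.not_distinguishes hx hu hv
      (hd.of_twin htwin (hP.ne_of_mem hx hu hbj) (hP.ne_of_mem hx hv hbj))
  · obtain ⟨c, hc⟩ := hP.exists_mem (show w ∈ ({s}ᶜ : Set V) from hws)
    exact hP.not_distinguishes hc hu hv hd

open scoped Classical in
/-- The vertices of `T \ {t}` lie in pairwise distinct independent parts. -/
theorem ncard_diff_le_card_parts [Fintype V] {T : Set V} {t : V}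
    (hno : ¬ HasMPartitionOn A M Set.univ) (hP : IsMPartitionOn A M {t}ᶜ P)
    (hT : Homogeneous A T) (hTc : StrongClique A T) (ht : t ∈ T) :
    (T \ {t}).ncard ≤ #{i | M i i = false ∧ (P i ∩ T).Nonempty} := by
  rw [Set.ncard_eq_toFinset_card']
  refine card_le_card_of_forall_subsingleton (fun y i => y ∈ P i) (fun y hy => ?_)
    (fun i hi => ?_)
  · obtain ⟨hyT, hyt⟩ : y ∈ T ∧ y ≠ t := by simpa using hy
    obtain ⟨i, hi⟩ := hP.exists_mem (show y ∈ ({t}ᶜ : Set V) from hyt)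
    have hdiag : M i i = false := diag_false_of_twin hno hP hi (hTc t ht y hyT hyt.symm).1
      (hTc t ht y hyT hyt.symm).2 (hT t ht y hyT hyt.symm)
    exact ⟨i, mem_filter.2 ⟨mem_univ _, hdiag, y, hi, hyT⟩, hi⟩
  · rintro y ⟨hy, hyi⟩ z ⟨hz, hzi⟩
    by_contra hyz
    have hdiag : M i i = false := (mem_filter.1 hi).2.1
    exact hP.not_adj_of_diag_false hdiag hyi hzi hyz
      (hTc y (Set.mem_toFinset.1 hy).1 z (Set.mem_toFinset.1 hz).1 hyz).1

end IsMPartitionOn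

namespace MinimalObstruction

variable {A : V → V → Prop} {n : ℕ} {M : Fin n → Fin n → Bool}

theorem ncard_le_of_homogeneous [Fintype V] {T : Set V} (hobs : MinimalObstruction A M)
    (hT : Homogeneous A T) (hTc : StrongClique A T) :
    T.ncard ≤ #{i | M i i = false} + 1 := by
  classical
  obtain rfl | ⟨t, ht⟩ := T.eq_empty_or_nonempty
  · simp
  obtain ⟨P, hP⟩ := hobs.2 t
  have hdiff := hP.ncard_diff_le_card_parts hobs.1 hT hTc ht
  have hparts : #{i | M i i = false ∧ (P i ∩ T).Nonempty} ≤ #{i | M i i = false} :=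
    card_le_card (monotone_filter_right _ fun _ _ h => h.1)
  rw [Set.ncard_sdiff_singleton_of_mem ht] at hdiff
  omega

theorem card_le [Fintype V] {S : Set V} (hobs : MinimalObstruction A M)
    (hS : Homogeneous A S) (hSc : StrongClique A S)
    (hcard : S.ncard = #{i | M i i = false} + 1) (htwo : 2 ≤ #{i | M i i = false}) :
    Fintype.card V ≤ (#{i | M i i = false} + 1) * (#{i | M i i = true} + 1) := by
  classical
  set z := #{i | M i i = false} with hz
  obtain ⟨s, hs⟩ : S.Nonempty := Set.nonempty_of_ncard_ne_zero (by omega)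
  obtain ⟨P, hP⟩ := hobs.2 s
  have hmeet : ∀ i, M i i = false → ∃ x ∈ S, x ∈ P i := by
    have h := hP.ncard_diff_le_card_parts hobs.1 hS hSc hs
    rw [Set.ncard_sdiff_singleton_of_mem hs, hcard, Nat.add_sub_cancel, ← filter_filter] at h
    intro i hi
    obtain ⟨x, hxi, hxS⟩ :=
      filter_card_eq (h.antisymm (card_filter_le _ _)).symm i (mem_filter.2 ⟨mem_univ _, hi⟩)
    exact ⟨x, hxS, hxi⟩
  have hzero : ∀ i, M i i = false → (P i).ncard ≤ 1 := by
    intro i hi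
    obtain ⟨j, hj, hji⟩ := exists_mem_ne htwo i
    obtain ⟨x, hxS, hxi⟩ := hmeet i hi
    obtain ⟨y, hyS, hyj⟩ := hmeet j (mem_filter.1 hj).2
    exact hP.ncard_le_one hS hSc hji.symm hi hxS hxi hyS hyj
  have hone : ∀ j, M j j = true → (P j).ncard ≤ z + 1 := by
    intro j hj
    obtain ⟨b, hb⟩ := card_pos.1 (by omega : 0 < z)
    have hb := (mem_filter.1 hb).2
    obtain ⟨x, hxS, hxb⟩ := hmeet b hb
    have hxs : x ≠ s := by simpa using hP.1 b hxb
    have hbj : b ≠ j := by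
      rintro rfl
      simp [hb] at hj
    exact hobs.ncard_le_of_homogeneous (hP.homogeneous_of_twin hxb hbj (hS s hs x hxS hxs.symm))
      (hP.strongClique hj)
  calc Fintype.card V = ({s}ᶜ : Set V).ncard + 1 := by
        rw [← Set.ncard_singleton s, Set.ncard_compl_add_ncard, Nat.card_eq_fintype_card]
    _ ≤ ∑ i, (P i).ncard + 1 := by grw [hP.ncard_le_sum]
    _ ≤ ∑ i, (if M i i = true then z + 1 else 1) + 1 := by
        gcongr with i
        split_ifs with h
        · exact hone i h
        · exact hzero i (by simpa using h)
    _ = (z + 1) * (#{i | M i i = true} + 1) := by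
        simp only [sum_ite, sum_const, smul_eq_mul, Bool.not_eq_true, ← hz]
        ring

end MinimalObstruction

theorem stmt12_general [Fintype V] {k l : ℕ} (A : V → V → Prop)
    (M : Fin (k + l) → Fin (k + l) → Bool)
    (hdiag : ∀ i : Fin (k + l), M i i = true ↔ k ≤ (i : ℕ))
    (hk : 2 ≤ k) (hobs : MinimalObstruction A M)
    (S : Set V) (hhom : Homogeneous A S) (hsc : StrongClique A S)
    (hcard : S.ncard = k + 1) :
    Fintype.card V ≤ (k + 1) * (l + 1) := by
  have hzero : #{i | M i i = false} = k := by
    have hfilter : ({i | M i i = false} : Finset (Fin (k + l))) =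
        ({i | (i : ℕ) < k} : Finset (Fin (k + l))) := by
      ext i
      simp [← Bool.not_eq_true, hdiag]
    rw [hfilter, Fin.card_filter_val_lt]
    omega
  have hone : #{i | M i i = true} = l := by
    have hsplit := card_filter_add_card_filter_not (s := univ) fun i : Fin (k + l) => M i i = true
    simp only [Bool.not_eq_true, hzero, card_univ, Fintype.card_fin] at hsplit
    omega
  have hbound := hobs.card_le hhom hsc (by rw [hzero, hcard]) (by rw [hzero]; exact hk)
  rwa [hzero, hone] at hbound

theorem stmt12 [Fintype V] {k l : ℕ} (A : V → V → Prop) (hirr : ∀ v, ¬ A v v)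
    (M : Fin (k + l) → Fin (k + l) → Bool)
    (hdiag : ∀ i : Fin (k + l), M i i = true ↔ k ≤ (i : ℕ))
    (hk : 2 ≤ k) (hobs : MinimalObstruction A M)
    (S : Set V) (hhom : Homogeneous A S) (hsc : StrongClique A S)
    (hcard : S.ncard = k + 1) :
    Fintype.card V ≤ (k + 1) * (l + 1) :=
  stmt12_general A M hdiag hk hobs S hhom hsc hcard
end

section
/- Let M be a {0,1}-matrix with k = 1 diagonal zero and ℓ diagonal ones, and D a minimal M-obstruction. If D contains a pair of true twins, then |V(D)| ≤ 2(ℓ+1). -/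
variable {V : Type*}

/-!
Let `u`, `v` be true twins of `D` and suppose `D` has at least `2n + 1` vertices, `n = 1 + l`.
In an `M`-partition of `D - v`, the vertex `u` lies in the independent part (otherwise `v` could
join its clique part), and two vertices of a clique part are true twins of `D`. As `D` has no three
pairwise true twins, the clique parts have at most two vertices, so the independent part contains
vertices `w ≠ u`; these are false twins of each other and look like `u` from outside `{u, v}`.

If there is only one such `w`, every clique part is a pair `{x, y}` of true twins, and in an
`M`-partition of `D - y` the vertex `x` shares the independent part with `w` alone. This forces
`M 0 j = M j 0 = 0` for all `j ≠ 0`, so `w` is isolated and joins the independent part of any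
`M`-partition of `D - w`. If there are several, an `M`-partition of `D - w` puts the others alone
into clique parts; comparing its parts with those of the partition of `D - v` leaves at most `2n`
vertices.
-/

section Twins

variable {A : V → V → Prop}

def AgreeAt (A : V → V → Prop) (a b t : V) : Prop :=
  (A a t ↔ A b t) ∧ (A t a ↔ A t b)

theorem AgreeAt.symm {a b t : V} (h : AgreeAt A a b t) : AgreeAt A b a t :=
  ⟨h.1.symm, h.2.symm⟩

theorem AgreeAt.swap {a b c d : V} (hc : AgreeAt A a b c) (hd : AgreeAt A a b d)
    (h : AgreeAt A c d a) : AgreeAt A c d b :=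
  ⟨hc.2.symm.trans (h.1.trans hd.2), hc.1.symm.trans (h.2.trans hd.1)⟩

def TrueTwins (A : V → V → Prop) (a b : V) : Prop :=
  a ≠ b ∧ A a b ∧ A b a ∧ ∀ t, t ≠ a → t ≠ b → AgreeAt A a b t

theorem TrueTwins.symm {a b : V} (h : TrueTwins A a b) : TrueTwins A b a :=
  ⟨h.1.symm, h.2.2.1, h.2.1, fun t hb ha => (h.2.2.2 t ha hb).symm⟩

theorem TrueTwins.agreeAt_of_notMem [DecidableEq V] {a b : V} (h : TrueTwins A a b) :
    ∀ t ∉ ({a, b} : Finset V), AgreeAt A a b t := fun t ht => by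
  simp only [Finset.mem_insert, Finset.mem_singleton, not_or] at ht
  exact h.2.2.2 t ht.1 ht.2

theorem TrueTwinsOn.trueTwins {a b : V} (h : TrueTwinsOn A Set.univ a b) : TrueTwins A a b := by
  obtain ⟨-, -, hne, hab, hba, hnd⟩ := h
  refine ⟨hne, hab, hba, fun t ha hb => ?_⟩
  have := hnd t trivial
  simp only [Distinguishes, not_and, not_or] at this
  have := this ha hb
  refine ⟨⟨?_, ?_⟩, ?_, ?_⟩ <;> tauto

end Twins

/-- An `M`-partition of `U`, recorded by the index of the part of each vertex
(the values outside `U` are irrelevant). -/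
def IsMColouring (A : V → V → Prop) {n : ℕ} (M : Fin n → Fin n → Bool) (U : Set V)
    (f : V → Fin n) : Prop :=
  ∀ a ∈ U, ∀ b ∈ U, a ≠ b → (A a b ↔ M (f a) (f b) = true)

section Colouring

variable {A : V → V → Prop} {n : ℕ} {M : Fin n → Fin n → Bool}

theorem IsMColouring.hasMPartitionOn {U : Set V} {f : V → Fin n} (hf : IsMColouring A M U f) :
    HasMPartitionOn A M U :=
  ⟨fun i => {v ∈ U | f v = i}, fun _ _ h => h.1,
    fun v hv => ⟨f v, ⟨hv, rfl⟩, fun _ h => h.2.symm⟩,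
    fun _ _ a ha b hb hne => by rw [← ha.2, ← hb.2]; exact hf a ha.1 b hb.1 hne⟩

theorem HasMPartitionOn.exists_isMColouring [NeZero n] {U : Set V}
    (h : HasMPartitionOn A M U) : ∃ f, IsMColouring A M U f := by
  classical
  obtain ⟨P, -, hcover, hadj⟩ := h
  refine ⟨fun v => if hv : v ∈ U then (hcover v hv).exists.choose else 0, fun a ha b hb hne => ?_⟩
  simp only [dif_pos ha, dif_pos hb]
  exact hadj _ _ a (hcover a ha).exists.choose_spec b (hcover b hb).exists.choose_spec hne

variable {x : V} {f : V → Fin n}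

theorem IsMColouring.agreeAt (hf : IsMColouring A M {x}ᶜ f) {a b t : V} (hab : f a = f b)
    (ha : a ≠ x) (hb : b ≠ x) (ht : t ≠ x) (hta : t ≠ a) (htb : t ≠ b) : AgreeAt A a b t :=
  ⟨by rw [hf a ha t ht (Ne.symm hta), hf b hb t ht (Ne.symm htb), hab],
    by rw [hf t ht a ha hta, hf t ht b hb htb, hab]⟩

theorem IsMColouring.adj_of_trueTwins (hf : IsMColouring A M {x}ᶜ f) {a b c : V}
    (hab : TrueTwins A a b) (hac : f a = f c) (ha : a ≠ x) (hb : b ≠ x) (hc : c ≠ x)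
    (hca : c ≠ a) (hcb : c ≠ b) : A a c :=
  (hab.2.2.2 c hca hcb).1.2 <| (hf.agreeAt hac ha hc hb hab.1.symm (Ne.symm hcb)).2.1 hab.2.2.1

variable [NeZero n] {U : Set V} {a b : V}

theorem IsMColouring.not_adj_of_eq_zero (hM : ∀ i, M i i = true ↔ i ≠ 0)
    (hf : IsMColouring A M U f) (ha : a ∈ U) (hb : b ∈ U) (hne : a ≠ b) (hfa : f a = 0)
    (hfb : f b = 0) : ¬ A a b := by
  rw [hf a ha b hb hne, hfa, hfb, hM]
  exact fun h => h rfl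

theorem IsMColouring.adj_of_eq (hM : ∀ i, M i i = true ↔ i ≠ 0) (hf : IsMColouring A M U f)
    (ha : a ∈ U) (hb : b ∈ U) (hne : a ≠ b) (hab : f a = f b) (h0 : f a ≠ 0) : A a b := by
  rw [hf a ha b hb hne, ← hab, hM]
  exact h0

theorem IsMColouring.trueTwins (hM : ∀ i, M i i = true ↔ i ≠ 0) (hf : IsMColouring A M {x}ᶜ f)
    (hab : f a = f b) (h0 : f a ≠ 0) (hne : a ≠ b) (ha : a ≠ x) (hb : b ≠ x)
    (hx : AgreeAt A a b x) : TrueTwins A a b := by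
  refine ⟨hne, hf.adj_of_eq hM ha hb hne hab h0,
    hf.adj_of_eq hM hb ha hne.symm hab.symm (hab ▸ h0), fun t hta htb => ?_⟩
  by_cases htx : t = x
  · exact htx ▸ hx
  · exact hf.agreeAt hab ha hb htx hta htb

end Colouring

namespace MinimalObstruction

variable {A : V → V → Prop} {n : ℕ} {M : Fin n → Fin n → Bool} {x : V} {f : V → Fin n}

theorem not_fits (hD : MinimalObstruction A M) (hf : IsMColouring A M {x}ᶜ f) (c : Fin n) :
    ¬ ∀ t, t ≠ x → (A x t ↔ M c (f t) = true) ∧ (A t x ↔ M (f t) c = true) := by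
  classical
  intro hc
  refine hD.1 (IsMColouring.hasMPartitionOn (f := Function.update f x c) fun a _ b _ hne => ?_)
  rcases eq_or_ne a x with rfl | ha
  · rw [Function.update_self, Function.update_of_ne (Ne.symm hne)]
    exact (hc b (Ne.symm hne)).1
  rcases eq_or_ne b x with rfl | hb
  · rw [Function.update_self, Function.update_of_ne hne]
    exact (hc a hne).2
  rw [Function.update_of_ne ha, Function.update_of_ne hb]
  exact hf a ha b hb hne

theorem not_fits_twin (hD : MinimalObstruction A M) {a b : V} (hf : IsMColouring A M {b}ᶜ f)
    (hne : a ≠ b) (htw : ∀ t, t ≠ a → t ≠ b → AgreeAt A a b t)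
    (hba : A b a ↔ M (f a) (f a) = true) (hab : A a b ↔ M (f a) (f a) = true) : False := by
  refine hD.not_fits hf (f a) fun t htb => ?_
  rcases eq_or_ne t a with rfl | hta
  · exact ⟨hba, hab⟩
  · have := htw t hta htb
    exact ⟨this.1.symm.trans (hf a hne t htb (Ne.symm hta)),
      this.2.symm.trans (hf t htb a hne hta)⟩

variable [NeZero n]

theorem exists_isMColouring (hD : MinimalObstruction A M) (x : V) :
    ∃ f, IsMColouring A M {x}ᶜ f :=
  (hD.2 x).exists_isMColouring

theorem colour_eq_zero_of_trueTwins (hD : MinimalObstruction A M)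
    (hM : ∀ i, M i i = true ↔ i ≠ 0) {a b : V} (hab : TrueTwins A a b)
    (hf : IsMColouring A M {b}ᶜ f) : f a = 0 := by
  by_contra h0
  have hM' : M (f a) (f a) = true := (hM _).2 h0
  exact hD.not_fits_twin hf hab.1 hab.2.2.2 (iff_of_true hab.2.2.1 hM')
    (iff_of_true hab.2.1 hM')

theorem colour_ne_zero_of_falseTwins (hD : MinimalObstruction A M)
    (hM : ∀ i, M i i = true ↔ i ≠ 0) {a b : V} (hf : IsMColouring A M {b}ᶜ f) (hne : a ≠ b)
    (hab : ¬ A a b) (hba : ¬ A b a) (htw : ∀ t, t ≠ a → t ≠ b → AgreeAt A a b t) :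
    f a ≠ 0 := by
  intro h0
  have hM' : ¬ M (f a) (f a) = true := by rw [hM, h0]; exact fun h => h rfl
  exact hD.not_fits_twin hf hne htw (iff_of_false hba hM') (iff_of_false hab hM')

theorem not_trueTwins_triangle (hD : MinimalObstruction A M) (hM : ∀ i, M i i = true ↔ i ≠ 0)
    {a b c : V} (hab : TrueTwins A a b) (hac : TrueTwins A a c) (hbc : TrueTwins A b c) :
    False := by
  obtain ⟨f, hf⟩ := hD.exists_isMColouring c
  exact hf.not_adj_of_eq_zero hM hac.1 hbc.1 hab.1 (hD.colour_eq_zero_of_trueTwins hM hac hf)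
    (hD.colour_eq_zero_of_trueTwins hM hbc hf) hab.2.1

theorem card_le_two_of_trueTwins (hD : MinimalObstruction A M) (hM : ∀ i, M i i = true ↔ i ≠ 0)
    {s : Finset V} (hs : ∀ a ∈ s, ∀ b ∈ s, a ≠ b → TrueTwins A a b) : s.card ≤ 2 := by
  by_contra! h
  obtain ⟨a, ha, b, hb, c, hc, hab, hac, hbc⟩ := Finset.two_lt_card.1 h
  exact hD.not_trueTwins_triangle hM (hs a ha b hb hab) (hs a ha c hc hac) (hs b hb c hc hbc)

end MinimalObstruction

theorem Finset.sum_add_card_le_two_mul {ι : Type*} {s t : Finset ι} {a : ι → ℕ} (hts : t ⊆ s)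
    (h2 : ∀ i ∈ s, a i ≤ 2) (h1 : ∀ i ∈ t, a i ≤ 1) : ∑ i ∈ s, a i + t.card ≤ 2 * s.card := by
  classical
  have hsd : ∑ i ∈ s \ t, a i ≤ ∑ _i ∈ s \ t, 2 :=
    Finset.sum_le_sum fun i hi => h2 i (Finset.mem_sdiff.1 hi).1
  have ht : ∑ i ∈ t, a i ≤ ∑ _i ∈ t, 1 := Finset.sum_le_sum h1
  rw [← Finset.sum_sdiff hts]
  simp only [Finset.sum_const, smul_eq_mul] at hsd ht
  have := Finset.card_sdiff_add_card_eq_card hts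
  omega

section Counting

variable [Fintype V] [DecidableEq V] {n : ℕ}

def colourClass (f : V → Fin n) (X : Finset V) (i : Fin n) : Finset V :=
  Finset.univ.filter fun t => t ∉ X ∧ f t = i

variable {f : V → Fin n} {X : Finset V} {i : Fin n} {t u v w : V}

theorem mem_colourClass : t ∈ colourClass f X i ↔ t ∉ X ∧ f t = i := by
  simp [colourClass]

theorem mem_colourClass_pair : t ∈ colourClass f {u, v} i ↔ t ≠ u ∧ t ≠ v ∧ f t = i := by
  simp [colourClass, and_assoc]

theorem mem_colourClass_triple :
    t ∈ colourClass f {u, v, w} i ↔ t ≠ u ∧ t ≠ v ∧ t ≠ w ∧ f t = i := by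
  simp [colourClass, and_assoc]

theorem sum_card_colourClass (f : V → Fin n) (X : Finset V) :
    ∑ i, (colourClass f X i).card + X.card = Fintype.card V := by
  have hfib := Finset.card_eq_sum_card_fiberwise (f := f) (s := Finset.univ \ X)
    (t := Finset.univ) fun _ _ => Finset.mem_coe.2 (Finset.mem_univ _)
  have hclass : ∀ i, (Finset.univ \ X).filter (fun t => f t = i) = colourClass f X i := by
    intro i
    ext t
    simp [colourClass]
  simp only [hclass] at hfib
  rw [← hfib, Finset.card_sdiff_add_card_eq_card (Finset.subset_univ X), Finset.card_univ]

theorem card_le_of_colourClass_le_two [NeZero n] (f : V → Fin n) (X : Finset V)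
    {T : Finset (Fin n)} (hT0 : 0 ∉ T) (h2 : ∀ i ≠ 0, (colourClass f X i).card ≤ 2)
    (h1 : ∀ i ∈ T, (colourClass f X i).card ≤ 1) :
    Fintype.card V + T.card ≤ X.card + (colourClass f X 0).card + 2 * (n - 1) := by
  have hsum := sum_card_colourClass f X
  rw [← Finset.add_sum_erase _ _ (Finset.mem_univ 0)] at hsum
  have hT : T ⊆ Finset.univ.erase 0 := fun i hi =>
    Finset.mem_erase.2 ⟨fun h => hT0 (h ▸ hi), Finset.mem_univ i⟩
  have := Finset.sum_add_card_le_two_mul hT (fun i hi => h2 i (Finset.ne_of_mem_erase hi)) h1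
  rw [Finset.card_erase_of_mem (Finset.mem_univ 0), Finset.card_univ, Fintype.card_fin] at this
  omega

theorem IsMColouring.trueTwins_of_mem_colourClass [NeZero n] {A : V → V → Prop}
    {M : Fin n → Fin n → Bool} {a b c d : V} (hM : ∀ i, M i i = true ↔ i ≠ 0)
    (hf : IsMColouring A M {b}ᶜ f) (haX : a ∈ X) (hbX : b ∈ X) (hab : a ≠ b)
    (hagree : ∀ t ∉ X, AgreeAt A a b t) (hi : i ≠ 0) (hc : c ∈ colourClass f X i)
    (hd : d ∈ colourClass f X i) (hne : c ≠ d) : TrueTwins A c d := by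
  rw [mem_colourClass] at hc hd
  have hcd : f c = f d := hc.2.trans hd.2.symm
  have hcb : c ≠ b := fun h => hc.1 (h ▸ hbX)
  have hdb : d ≠ b := fun h => hd.1 (h ▸ hbX)
  refine hf.trueTwins hM hcd (hc.2 ▸ hi) hne hcb hdb <| (hagree c hc.1).swap (hagree d hd.1) <|
    hf.agreeAt hcd hcb hdb hab (fun h => hc.1 (h ▸ haX)) (fun h => hd.1 (h ▸ haX))

end Counting

namespace MinimalObstruction

variable [Fintype V] [DecidableEq V] {A : V → V → Prop} {n : ℕ} [NeZero n]
  {M : Fin n → Fin n → Bool} {f : V → Fin n} {X : Finset V} {a b : V}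

theorem card_colourClass_le_two (hD : MinimalObstruction A M) (hM : ∀ i, M i i = true ↔ i ≠ 0)
    (hf : IsMColouring A M {b}ᶜ f) (haX : a ∈ X) (hbX : b ∈ X) (hab : a ≠ b)
    (hagree : ∀ t ∉ X, AgreeAt A a b t) {i : Fin n} (hi : i ≠ 0) :
    (colourClass f X i).card ≤ 2 :=
  hD.card_le_two_of_trueTwins hM fun _ hc _ hd hne =>
    hf.trueTwins_of_mem_colourClass hM haX hbX hab hagree hi hc hd hne

theorem card_le_of_trueTwins (hD : MinimalObstruction A M) (hM : ∀ i, M i i = true ↔ i ≠ 0)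
    (hab : TrueTwins A a b) (hf : IsMColouring A M {b}ᶜ f) {T : Finset (Fin n)} (hT0 : 0 ∉ T)
    (h1 : ∀ i ∈ T, (colourClass f {a, b} i).card ≤ 1) :
    Fintype.card V + T.card ≤ 2 + (colourClass f {a, b} 0).card + 2 * (n - 1) := by
  have := card_le_of_colourClass_le_two f {a, b} hT0 (fun i hi =>
    hD.card_colourClass_le_two hM hf (by simp) (by simp) hab.1 hab.agreeAt_of_notMem hi) h1
  rwa [Finset.card_pair hab.1] at this

theorem exists_colour_eq_zero (hD : MinimalObstruction A M) (hM : ∀ i, M i i = true ↔ i ≠ 0)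
    (hn : 2 * n + 1 ≤ Fintype.card V) (hab : TrueTwins A a b) (hf : IsMColouring A M {b}ᶜ f) :
    ∃ z, z ≠ a ∧ z ≠ b ∧ f z = 0 := by
  have hcount := hD.card_le_of_trueTwins hM hab hf (T := ∅) (by simp) (by simp)
  obtain ⟨z, hz⟩ : (colourClass f {a, b} 0).Nonempty := by
    rw [← Finset.card_pos]
    have := NeZero.pos n
    rw [Finset.card_empty] at hcount
    omega
  exact ⟨z, mem_colourClass_pair.1 hz⟩

/-- The second vertex `z` of the independent part of `y` in an `M`-colouring of `D - x` is
adjacent to `u` but not to `y`, so only `w` can tell `u` and `y` apart. -/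
theorem not_adj_of_trueTwins_of_colour_eq (hD : MinimalObstruction A M)
    (hM : ∀ i, M i i = true ↔ i ≠ 0) (hn : 2 * n + 1 ≤ Fintype.card V) {x y u w : V}
    {g : V → Fin n} (hxy : TrueTwins A x y) (hg : IsMColouring A M {w}ᶜ g) (hgu : g u = g y)
    (h0 : g u ≠ 0) (huy : u ≠ y) (hux : u ≠ x) (huw : u ≠ w) (hyw : y ≠ w) : ¬ A w y := by
  intro hwy
  have huy' : A u y := hg.adj_of_eq hM huw hyw huy hgu h0
  have hyu : A y u := hg.adj_of_eq hM hyw huw huy.symm hgu.symm (hgu ▸ h0)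
  obtain ⟨h, hh⟩ := hD.exists_isMColouring x
  have hy0 := hD.colour_eq_zero_of_trueTwins hM hxy.symm hh
  obtain ⟨z, hzy, hzx, hz0⟩ := hD.exists_colour_eq_zero hM hn hxy.symm hh
  have hnzy : ¬ A z y := hh.not_adj_of_eq_zero hM hzx hxy.1.symm hzy hz0 hy0
  have hzu : z ≠ u := fun h => hnzy (h ▸ huy')
  have hzw : z ≠ w := fun h => hnzy (h ▸ hwy)
  have hzu' : A z u := (hh.agreeAt (hz0.trans hy0.symm) hzx hxy.1.symm hux hzu.symm huy).1.2 hyu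
  exact hnzy ((hg.agreeAt hgu huw hyw hzw hzu hzy).2.1 hzu')

end MinimalObstruction

/-- The standing assumptions of the argument by contradiction. -/
structure TwinSetup [Fintype V] (A : V → V → Prop) {n : ℕ} [NeZero n]
    (M : Fin n → Fin n → Bool) (u v : V) (f : V → Fin n) : Prop where
  obstruction : MinimalObstruction A M
  diag : ∀ i, M i i = true ↔ i ≠ 0
  large : 2 * n + 1 ≤ Fintype.card V
  twins : TrueTwins A u v
  colouring : IsMColouring A M {v}ᶜ f

namespace TwinSetup

variable [Fintype V] {A : V → V → Prop} {n : ℕ} [NeZero n] {M : Fin n → Fin n → Bool}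
  {u v w : V} {f g : V → Fin n}

theorem colour_eq_zero (S : TwinSetup A M u v f) : f u = 0 :=
  S.obstruction.colour_eq_zero_of_trueTwins S.diag S.twins S.colouring

variable [DecidableEq V]

theorem not_adj_of_mem (S : TwinSetup A M u v f) (hw : w ∈ colourClass f {u, v} 0) :
    ¬ A u w ∧ ¬ A w u ∧ ¬ A v w ∧ ¬ A w v := by
  obtain ⟨hwu, hwv, hw0⟩ := mem_colourClass_pair.1 hw
  have huw := S.colouring.not_adj_of_eq_zero S.diag S.twins.1 hwv hwu.symm S.colour_eq_zero hw0
  have hwu' := S.colouring.not_adj_of_eq_zero S.diag hwv S.twins.1 hwu hw0 S.colour_eq_zero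
  have hagree := S.twins.2.2.2 w hwu hwv
  exact ⟨huw, hwu', fun h => huw (hagree.1.2 h), fun h => hwu' (hagree.2.2 h)⟩

theorem agreeAt_of_mem (S : TwinSetup A M u v f) {t : V} (hw : w ∈ colourClass f {u, v} 0)
    (htu : t ≠ u) (htv : t ≠ v) (htw : t ≠ w) : AgreeAt A u w t := by
  obtain ⟨hwu, hwv, hw0⟩ := mem_colourClass_pair.1 hw
  exact S.colouring.agreeAt (S.colour_eq_zero.trans hw0.symm) S.twins.1 hwv htv htu htw

theorem agreeAt_of_notMem (S : TwinSetup A M u v f) (hw : w ∈ colourClass f {u, v} 0) :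
    ∀ t ∉ ({u, v, w} : Finset V), AgreeAt A u w t := fun t ht => by
  simp only [Finset.mem_insert, Finset.mem_singleton, not_or] at ht
  exact S.agreeAt_of_mem hw ht.1 ht.2.1 ht.2.2

theorem agreeAt_of_mem_of_mem (S : TwinSetup A M u v f) {w' t : V}
    (hw : w ∈ colourClass f {u, v} 0) (hw' : w' ∈ colourClass f {u, v} 0) (htw : t ≠ w)
    (htw' : t ≠ w') : AgreeAt A w w' t := by
  obtain ⟨-, hwv, hw0⟩ := mem_colourClass_pair.1 hw
  obtain ⟨-, hw'v, hw'0⟩ := mem_colourClass_pair.1 hw'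
  by_cases htv : t = v
  · subst htv
    exact ⟨iff_of_false (S.not_adj_of_mem hw).2.2.2 (S.not_adj_of_mem hw').2.2.2,
      iff_of_false (S.not_adj_of_mem hw).2.2.1 (S.not_adj_of_mem hw').2.2.1⟩
  · exact S.colouring.agreeAt (hw0.trans hw'0.symm) hwv hw'v htv htw htw'

theorem trueTwins_of_mem (S : TwinSetup A M u v f) {i : Fin n} (hi : i ≠ 0) {c d : V}
    (hc : c ∈ colourClass f {u, v} i) (hd : d ∈ colourClass f {u, v} i) (hne : c ≠ d) :
    TrueTwins A c d :=
  S.colouring.trueTwins_of_mem_colourClass S.diag (by simp) (by simp) S.twins.1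
    S.twins.agreeAt_of_notMem hi hc hd hne

theorem card_add_card_le (S : TwinSetup A M u v f) {T : Finset (Fin n)} (hT0 : 0 ∉ T)
    (h1 : ∀ i ∈ T, (colourClass f {u, v} i).card ≤ 1) :
    Fintype.card V + T.card ≤ 2 + (colourClass f {u, v} 0).card + 2 * (n - 1) :=
  S.obstruction.card_le_of_trueTwins S.diag S.twins S.colouring hT0 h1

theorem one_lt_card_colourClass (S : TwinSetup A M u v f)
    (hW : (colourClass f {u, v} 0).card = 1) {i : Fin n} (hi : i ≠ 0) :
    1 < (colourClass f {u, v} i).card := by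
  by_contra! h
  have hcount := S.card_add_card_le (T := {i}) (by simpa using hi.symm)
    fun j hj => Finset.mem_singleton.1 hj ▸ h
  rw [Finset.card_singleton, hW] at hcount
  have := S.large
  have := NeZero.pos n
  omega

theorem adj_of_colour_eq (S : TwinSetup A M u v f) (hW : colourClass f {u, v} 0 = {w})
    {j : Fin n} (hj : j ≠ 0) {x y : V} (hx : x ∈ colourClass f {u, v} j)
    (hy : y ∈ colourClass f {u, v} j) (hxy : x ≠ y) (hg : IsMColouring A M {y}ᶜ g) {z : V}
    (hzx : z ≠ x) (hzy : z ≠ y) (hzw : z ≠ w) (hgz : g z = g x) : A z x := by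
  have hW1 : (colourClass f {u, v} 0).card = 1 := by rw [hW, Finset.card_singleton]
  obtain ⟨hxu, hxv, hfx⟩ := mem_colourClass_pair.1 hx
  obtain ⟨hyu, hyv, hfy⟩ := mem_colourClass_pair.1 hy
  by_cases hzu : z = u
  · subst hzu
    exact hg.adj_of_trueTwins S.twins hgz hzy (Ne.symm hyv) hxy hxu hxv
  by_cases hzv : z = v
  · subst hzv
    exact hg.adj_of_trueTwins S.twins.symm hgz hzy (Ne.symm hyu) hxy hxv hxu
  have hz : z ∈ colourClass f {u, v} (f z) := mem_colourClass_pair.2 ⟨hzu, hzv, rfl⟩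
  have hfz : f z ≠ 0 := fun h0 => hzw <| Finset.mem_singleton.1 <| hW ▸ h0 ▸ hz
  by_cases hfzj : f z = j
  · exfalso
    exact S.obstruction.not_trueTwins_triangle S.diag (S.trueTwins_of_mem hj (hfzj ▸ hz) hx hzx)
      (S.trueTwins_of_mem hj (hfzj ▸ hz) hy hzy) (S.trueTwins_of_mem hj hx hy hxy)
  obtain ⟨z', hz', hz'z⟩ := Finset.exists_mem_ne (S.one_lt_card_colourClass hW1 hfz) z
  have hfz' : f z' = f z := (mem_colourClass.1 hz').2
  exact hg.adj_of_trueTwins (S.trueTwins_of_mem hfz hz hz' hz'z.symm) hgz hzy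
    (fun h => hfzj (hfz' ▸ h ▸ hfy)) hxy (Ne.symm hzx) (fun h => hfzj (hfz' ▸ h ▸ hfx))

/-- For true twins `x`, `y` forming the part `j` of `f`, the second vertex of the independent
part of `x` in an `M`-colouring of `D - y` can only be `w`, and `u` sees `w` and `x` alike. -/
theorem off_diag_eq_false (S : TwinSetup A M u v f) (hW : colourClass f {u, v} 0 = {w})
    {j : Fin n} (hj : j ≠ 0) : M 0 j = false ∧ M j 0 = false := by
  have hW1 : (colourClass f {u, v} 0).card = 1 := by rw [hW, Finset.card_singleton]
  have hwW : w ∈ colourClass f {u, v} 0 := hW ▸ Finset.mem_singleton_self w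
  obtain ⟨x, hx, y, hy, hxy⟩ := Finset.one_lt_card.1 (S.one_lt_card_colourClass hW1 hj)
  have hxy' := S.trueTwins_of_mem hj hx hy hxy
  obtain ⟨hxu, hxv, hfx⟩ := mem_colourClass_pair.1 hx
  obtain ⟨g, hg⟩ := S.obstruction.exists_isMColouring y
  have hx0 := S.obstruction.colour_eq_zero_of_trueTwins S.diag hxy' hg
  obtain ⟨z, hzx, hzy, hz0⟩ := S.obstruction.exists_colour_eq_zero S.diag S.large hxy' hg
  have hzw : z = w := by
    by_contra hzw
    exact hg.not_adj_of_eq_zero S.diag hzy hxy hzx hz0 hx0 <|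
      S.adj_of_colour_eq hW hj hx hy hxy hg hzx hzy hzw (hz0.trans hx0.symm)
  subst hzw
  have hagree : AgreeAt A z x u := hg.agreeAt (hz0.trans hx0.symm) hzy hxy
    (mem_colourClass_pair.1 hy).1.symm (mem_colourClass_pair.1 hwW).1.symm (Ne.symm hxu)
  have hux := S.colouring u S.twins.1 x hxv (Ne.symm hxu)
  have hxu' := S.colouring x hxv u S.twins.1 hxu
  rw [S.colour_eq_zero, hfx] at hux hxu'
  exact ⟨Bool.eq_false_iff.2 fun hM => (S.not_adj_of_mem hwW).1 (hagree.2.2 (hux.2 hM)),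
    Bool.eq_false_iff.2 fun hM => (S.not_adj_of_mem hwW).2.1 (hagree.1.2 (hxu'.2 hM))⟩

/-- `w` is isolated, so it joins the independent part of an `M`-colouring of `D - w`. -/
theorem false_of_card_eq_one (S : TwinSetup A M u v f)
    (hW1 : (colourClass f {u, v} 0).card = 1) : False := by
  obtain ⟨w, hW⟩ := Finset.card_eq_one.1 hW1
  have hwW : w ∈ colourClass f {u, v} 0 := hW ▸ Finset.mem_singleton_self w
  have hM0 : ∀ i, M 0 i = false ∧ M i 0 = false := by
    intro i
    rcases eq_or_ne i 0 with rfl | hi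
    · have h00 : M 0 0 = false := Bool.eq_false_iff.2 fun h => (S.diag 0).1 h rfl
      exact ⟨h00, h00⟩
    · exact S.off_diag_eq_false hW hi
  have hiso : ∀ t, t ≠ w → ¬ A w t ∧ ¬ A t w := by
    intro t htw
    obtain ⟨huw, hwu, hvw, hwv⟩ := S.not_adj_of_mem hwW
    by_cases htu : t = u
    · exact htu ▸ ⟨hwu, huw⟩
    by_cases htv : t = v
    · exact htv ▸ ⟨hwv, hvw⟩
    have hagree := S.agreeAt_of_mem hwW htu htv htw
    have hut := S.colouring u S.twins.1 t htv (Ne.symm htu)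
    have htu' := S.colouring t htv u S.twins.1 htu
    rw [S.colour_eq_zero, (hM0 (f t)).1, Bool.false_eq_true, iff_false] at hut
    rw [S.colour_eq_zero, (hM0 (f t)).2, Bool.false_eq_true, iff_false] at htu'
    exact ⟨fun h => hut (hagree.1.2 h), fun h => htu' (hagree.2.2 h)⟩
  obtain ⟨k, hk⟩ := S.obstruction.exists_isMColouring w
  exact S.obstruction.not_fits hk 0 fun t ht =>
    ⟨iff_of_false (hiso t ht).1 (by simp [(hM0 _).1]),
      iff_of_false (hiso t ht).2 (by simp [(hM0 _).2])⟩

theorem colour_ne_zero_of_mem (S : TwinSetup A M u v f) (hw : w ∈ colourClass f {u, v} 0)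
    (hg : IsMColouring A M {w}ᶜ g) {s : V} (hs : s ∈ colourClass f {u, v} 0) (hsw : s ≠ w) :
    g s ≠ 0 := by
  obtain ⟨-, hsv, hs0⟩ := mem_colourClass_pair.1 hs
  obtain ⟨-, hwv, hw0⟩ := mem_colourClass_pair.1 hw
  exact S.obstruction.colour_ne_zero_of_falseTwins S.diag hg hsw
    (S.colouring.not_adj_of_eq_zero S.diag hsv hwv hsw hs0 hw0)
    (S.colouring.not_adj_of_eq_zero S.diag hwv hsv hsw.symm hw0 hs0)
    fun _ hts htw => S.agreeAt_of_mem_of_mem hs hw hts htw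

theorem eq_of_colour_eq (S : TwinSetup A M u v f) (hw : w ∈ colourClass f {u, v} 0)
    (hg : IsMColouring A M {w}ᶜ g) {s c : V} (hs : s ∈ colourClass f {u, v} 0) (hsw : s ≠ w)
    (hcw : c ≠ w) (hcs : g c = g s) : c = s := by
  by_contra hne
  obtain ⟨hsu, -, -⟩ := mem_colourClass_pair.1 hs
  obtain ⟨hnus, hnsu, -, hnsv⟩ := S.not_adj_of_mem hs
  have hsc : A s c := hg.adj_of_eq S.diag hsw hcw (Ne.symm hne) hcs.symm
    (S.colour_ne_zero_of_mem hw hg hs hsw)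
  have hcu : c ≠ u := fun h => hnsu (h ▸ hsc)
  have hcv : c ≠ v := fun h => hnsv (h ▸ hsc)
  have hwc : A w c := (S.agreeAt_of_mem_of_mem hs hw hne hcw).1.1 hsc
  have huc : A u c := (S.agreeAt_of_mem hw hcu hcv hcw).1.2 hwc
  exact hnus ((hg.agreeAt hcs hcw hsw (mem_colourClass_pair.1 hw).1.symm hcu.symm
    hsu.symm).2.1 huc)

theorem card_colourClass_colour_le_one (S : TwinSetup A M u v f)
    (hw : w ∈ colourClass f {u, v} 0) (hg : IsMColouring A M {w}ᶜ g) {s : V}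
    (hs : s ∈ colourClass f {u, v} 0) (hsw : s ≠ w) :
    (colourClass g {u, v, w} (g s)).card ≤ 1 := by
  have key : ∀ c ∈ colourClass g {u, v, w} (g s), c = s := fun c hc =>
    S.eq_of_colour_eq hw hg hs hsw (mem_colourClass_triple.1 hc).2.2.1
      (mem_colourClass_triple.1 hc).2.2.2
  exact Finset.card_le_one.2 fun a ha b hb => (key a ha).trans (key b hb).symm

theorem card_add_card_le_of_mem (S : TwinSetup A M u v f) (hw : w ∈ colourClass f {u, v} 0)
    (hg : IsMColouring A M {w}ᶜ g) {T : Finset (Fin n)} (hT0 : 0 ∉ T)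
    (hT1 : ∀ i ∈ T, (colourClass g {u, v, w} i).card ≤ 1)
    (hTW : ∀ s ∈ colourClass f {u, v} 0, s ≠ w → g s ∉ T) :
    Fintype.card V + ((colourClass f {u, v} 0).card - 1) + T.card ≤
      3 + (colourClass g {u, v, w} 0).card + 2 * (n - 1) := by
  set TW := ((colourClass f {u, v} 0).erase w).image g
  have hTW_card : TW.card = (colourClass f {u, v} 0).card - 1 := by
    rw [Finset.card_image_of_injOn, Finset.card_erase_of_mem hw]
    intro a ha b hb hab
    exact S.eq_of_colour_eq hw hg (Finset.mem_of_mem_erase hb) (Finset.ne_of_mem_erase hb)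
      (Finset.ne_of_mem_erase ha) hab
  have hdisj : Disjoint TW T := by
    refine Finset.disjoint_left.2 fun i hi => ?_
    obtain ⟨s, hs, rfl⟩ := Finset.mem_image.1 hi
    exact hTW s (Finset.mem_of_mem_erase hs) (Finset.ne_of_mem_erase hs)
  have hTW0 : 0 ∉ TW := fun h => by
    obtain ⟨s, hs, hs0⟩ := Finset.mem_image.1 h
    exact S.colour_ne_zero_of_mem hw hg (Finset.mem_of_mem_erase hs) (Finset.ne_of_mem_erase hs)
      hs0
  have hcount := card_le_of_colourClass_le_two g {u, v, w} (T := TW ∪ T)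
    (by simpa using ⟨hTW0, hT0⟩)
    (fun i hi => S.obstruction.card_colourClass_le_two S.diag hg (by simp) (by simp)
      (mem_colourClass_pair.1 hw).1.symm (S.agreeAt_of_notMem hw) hi)
    (fun i hi => (Finset.mem_union.1 hi).elim
      (fun hi => by
        obtain ⟨s, hs, rfl⟩ := Finset.mem_image.1 hi
        exact S.card_colourClass_colour_le_one hw hg (Finset.mem_of_mem_erase hs)
          (Finset.ne_of_mem_erase hs))
      (hT1 i))
  have hX : ({u, v, w} : Finset V).card ≤ 3 := Finset.card_le_three
  rw [Finset.card_union_of_disjoint hdisj, hTW_card] at hcount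
  omega

theorem colourClass_eq_empty (S : TwinSetup A M u v f) (hw : w ∈ colourClass f {u, v} 0)
    (hg : IsMColouring A M {w}ᶜ g) (h0 : g u = 0 ∨ g v = 0) :
    colourClass g {u, v, w} 0 = ∅ := by
  refine Finset.eq_empty_of_forall_notMem fun z hz => ?_
  obtain ⟨hzu, hzv, hzw, hz0⟩ := mem_colourClass_triple.1 hz
  have huw : u ≠ w := (mem_colourClass_pair.1 hw).1.symm
  have hvw : v ≠ w := (mem_colourClass_pair.1 hw).2.1.symm
  rcases h0 with hu0 | hv0
  · exact hg.not_adj_of_eq_zero S.diag huw hzw (Ne.symm hzu) hu0 hz0 <|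
      hg.adj_of_trueTwins S.twins (hu0.trans hz0.symm) huw hvw hzw hzu hzv
  · exact hg.not_adj_of_eq_zero S.diag hvw hzw (Ne.symm hzv) hv0 hz0 <|
      hg.adj_of_trueTwins S.twins.symm (hv0.trans hz0.symm) hvw huw hzw hzv hzu

theorem card_colourClass_le_one (S : TwinSetup A M u v f) (hw : w ∈ colourClass f {u, v} 0)
    (hg : IsMColouring A M {w}ᶜ g) (hu0 : g u ≠ 0) :
    (colourClass g {u, v, w} (g u)).card ≤ 1 := by
  by_contra! h
  obtain ⟨x, hx, y, hy, hxy⟩ := Finset.one_lt_card.1 h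
  have huw : u ≠ w := (mem_colourClass_pair.1 hw).1.symm
  have hxy' := hg.trueTwins_of_mem_colourClass S.diag (by simp) (by simp) huw
    (S.agreeAt_of_notMem hw) hu0 hx hy hxy
  obtain ⟨hxu, -, -, -⟩ := mem_colourClass_triple.1 hx
  obtain ⟨hyu, hyv, hyw, hgy⟩ := mem_colourClass_triple.1 hy
  have huy : A u y := hg.adj_of_eq S.diag huw hyw (Ne.symm hyu) hgy.symm hu0
  exact S.obstruction.not_adj_of_trueTwins_of_colour_eq S.diag S.large hxy' hg hgy.symm hu0
    (Ne.symm hyu) (Ne.symm hxu) huw hyw ((S.agreeAt_of_mem hw hyu hyv hyw).1.1 huy)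

/-- A true twin of `z` would be adjacent to `z'`. -/
theorem eq_of_mem_colourClass_zero (S : TwinSetup A M u v f) (hw : w ∈ colourClass f {u, v} 0)
    (hg : IsMColouring A M {w}ᶜ g) {z z' : V} (hz : z ∈ colourClass g {u, v, w} 0)
    (hz' : z' ∈ colourClass g {u, v, w} 0) (hne : z ≠ z') :
    f z ≠ 0 ∧ ∀ c ∈ colourClass f {u, v} (f z), c = z := by
  obtain ⟨hzu, hzv, hzw, hgz⟩ := mem_colourClass_triple.1 hz
  obtain ⟨-, -, hz'w, hgz'⟩ := mem_colourClass_triple.1 hz'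
  have hfz : f z ≠ 0 := fun h0 =>
    S.colour_ne_zero_of_mem hw hg (mem_colourClass_pair.2 ⟨hzu, hzv, h0⟩) hzw hgz
  refine ⟨hfz, fun c hc => ?_⟩
  by_contra hcz
  have hzc := S.trueTwins_of_mem hfz (mem_colourClass_pair.2 ⟨hzu, hzv, rfl⟩) hc (Ne.symm hcz)
  have hcw : c ≠ w := fun h =>
    hfz ((mem_colourClass.1 hc).2.symm.trans (h ▸ (mem_colourClass_pair.1 hw).2.2))
  apply hg.not_adj_of_eq_zero S.diag hzw hz'w hne hgz hgz'
  by_cases hcz' : c = z'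
  · exact hcz' ▸ hzc.2.1
  · exact hg.adj_of_trueTwins hzc (hgz.trans hgz'.symm) hzw hcw hz'w (Ne.symm hne) (Ne.symm hcz')

theorem false_of_two_le_card (S : TwinSetup A M u v f)
    (hW : 2 ≤ (colourClass f {u, v} 0).card) : False := by
  obtain ⟨w, hw⟩ : (colourClass f {u, v} 0).Nonempty := Finset.card_pos.1 (by omega)
  obtain ⟨g, hg⟩ := S.obstruction.exists_isMColouring w
  have hn := S.large
  by_cases h0 : g u = 0 ∨ g v = 0
  · have hcount := S.card_add_card_le_of_mem hw hg (T := ∅) (by simp) (by simp) (by simp)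
    rw [S.colourClass_eq_empty hw hg h0, Finset.card_empty, Finset.card_empty] at hcount
    omega
  have hu0 : g u ≠ 0 := fun h => h0 (Or.inl h)
  have hcount := S.card_add_card_le_of_mem hw hg (T := {g u}) (by simpa using Ne.symm hu0)
    (fun i hi => Finset.mem_singleton.1 hi ▸ S.card_colourClass_le_one hw hg hu0)
    (fun s hs hsw hgs => (mem_colourClass_pair.1 hs).1 (S.eq_of_colour_eq hw hg hs hsw
      (mem_colourClass_pair.1 hw).1.symm (Finset.mem_singleton.1 hgs).symm).symm)
  set G := colourClass g {u, v, w} 0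
  rw [Finset.card_singleton] at hcount
  have hG : 1 < G.card := by omega
  have halone : ∀ z ∈ G, f z ≠ 0 ∧ ∀ c ∈ colourClass f {u, v} (f z), c = z := fun z hz => by
    obtain ⟨z', hz', hne⟩ := Finset.exists_mem_ne hG z
    exact S.eq_of_mem_colourClass_zero hw hg hz hz' hne.symm
  have hGf : ∀ z ∈ G, z ∈ colourClass f {u, v} (f z) := fun z hz =>
    mem_colourClass_pair.2 ⟨(mem_colourClass_triple.1 hz).1, (mem_colourClass_triple.1 hz).2.1, rfl⟩
  have hcount' := S.card_add_card_le (T := G.image f)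
    (fun h => by obtain ⟨z, hz, hz0⟩ := Finset.mem_image.1 h; exact (halone z hz).1 hz0)
    (fun i hi => by
      obtain ⟨z, hz, rfl⟩ := Finset.mem_image.1 hi
      exact Finset.card_le_one.2 fun a ha b hb =>
        ((halone z hz).2 a ha).trans ((halone z hz).2 b hb).symm)
  rw [Finset.card_image_of_injOn fun a ha b hb hab =>
    ((halone a ha).2 b (by rw [hab]; exact hGf b hb)).symm] at hcount'
  omega

end TwinSetup

theorem stmt14_general [Fintype V] {l : ℕ} (A : V → V → Prop)
    (M : Fin (1 + l) → Fin (1 + l) → Bool)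
    (hdiag : ∀ i : Fin (1 + l), M i i = true ↔ 1 ≤ (i : ℕ))
    (hobs : MinimalObstruction A M)
    (htt : ∃ u v : V, TrueTwinsOn A Set.univ u v) :
    Fintype.card V ≤ 2 * (l + 1) := by
  classical
  obtain ⟨u, v, huv⟩ := htt
  by_contra! hn
  have hM : ∀ i, M i i = true ↔ i ≠ 0 := fun i => by
    rw [hdiag, Nat.one_le_iff_ne_zero, Fin.val_ne_zero_iff]
  obtain ⟨f, hf⟩ := hobs.exists_isMColouring v
  have S : TwinSetup A M u v f := ⟨hobs, hM, by omega, huv.trueTwins, hf⟩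
  have hcount := S.card_add_card_le (T := ∅) (by simp) (by simp)
  rw [Finset.card_empty] at hcount
  rcases (by omega : (colourClass f {u, v} 0).card = 1 ∨ 2 ≤ (colourClass f {u, v} 0).card)
    with h | h
  · exact S.false_of_card_eq_one h
  · exact S.false_of_two_le_card h

theorem stmt14 [Fintype V] {l : ℕ} (A : V → V → Prop) (hirr : ∀ v, ¬ A v v)
    (M : Fin (1 + l) → Fin (1 + l) → Bool)
    (hdiag : ∀ i : Fin (1 + l), M i i = true ↔ 1 ≤ (i : ℕ))
    (hobs : MinimalObstruction A M)
    (htt : ∃ u v : V, TrueTwinsOn A Set.univ u v) :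
    Fintype.card V ≤ 2 * (l + 1) :=
  stmt14_general A M hdiag hobs htt
end
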